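/- arXiv:2509.12014 — 12 statements merged into one kernel-verified Lean document; each statement's English description precedes it below -/
import Mathlib

section
/- Let E and F be inner product spaces over ℂ, let (a_s)_{s∈ι} be an orthonormal family in E and (b_s)_{s∈ι} an orthonormal family in F indexed by the same type ι. Let (g_j)_{j∈ℕ} be complex numbers with ∑_j |g_j| < ∞, and let (u_j)_{j∈ℕ} ⊆ E and (v_j)_{j∈ℕ} ⊆ F be families of unit vectors (not assumed orthogonal to each other). Then the function s ↦ |∑_{j∈ℕ} g_j ⟨a_s, u_j⟩ ⟨b_s, v_j⟩| is summable over ι and ∑_{s∈ι} |∑_{j∈ℕ} g_j ⟨a_s, u_j⟩ ⟨b_s, v_j⟩| ≤ ∑_{j∈ℕ} |g_j|. -/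
/-!
For each `j`, Cauchy–Schwarz in `s` followed by Bessel's inequality for the orthonormal families
gives `∑ₛ |⟨a s, u j⟩| |⟨b s, v j⟩| ≤ ‖u j‖ ‖v j‖ = 1`. Hence the finite sums
`∑_{s ∈ S} |∑ⱼ g j ⟨a s, u j⟩ ⟨b s, v j⟩|` are bounded by `∑ⱼ |g j| ∑_{s ∈ S} |⟨a s, u j⟩| |⟨b s, v j⟩|
≤ ∑ⱼ |g j|` after exchanging the finite sum over `s` with the series over `j`.
-/

theorem Orthonormal.sqrt_sum_norm_inner_sq_le {𝕜 E ι : Type*} [RCLike 𝕜] [NormedAddCommGroup E]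
    [InnerProductSpace 𝕜 E] {e : ι → E} (he : Orthonormal 𝕜 e) (x : E) (S : Finset ι) :
    √(∑ s ∈ S, ‖(inner 𝕜 (e s) x : 𝕜)‖ ^ 2) ≤ ‖x‖ :=
  (Real.sqrt_le_left (norm_nonneg x)).mpr (he.sum_inner_products_le x)

theorem Orthonormal.sum_norm_inner_mul_norm_inner_le {𝕜 E F ι : Type*} [RCLike 𝕜]
    [NormedAddCommGroup E] [InnerProductSpace 𝕜 E] [NormedAddCommGroup F] [InnerProductSpace 𝕜 F]
    {a : ι → E} {b : ι → F} (ha : Orthonormal 𝕜 a) (hb : Orthonormal 𝕜 b) (x : E) (y : F)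
    (S : Finset ι) :
    ∑ s ∈ S, ‖(inner 𝕜 (a s) x : 𝕜)‖ * ‖(inner 𝕜 (b s) y : 𝕜)‖ ≤ ‖x‖ * ‖y‖ :=
  calc ∑ s ∈ S, ‖(inner 𝕜 (a s) x : 𝕜)‖ * ‖(inner 𝕜 (b s) y : 𝕜)‖
      ≤ √(∑ s ∈ S, ‖(inner 𝕜 (a s) x : 𝕜)‖ ^ 2) * √(∑ s ∈ S, ‖(inner 𝕜 (b s) y : 𝕜)‖ ^ 2) :=
        Real.sum_mul_le_sqrt_mul_sqrt S _ _
    _ ≤ ‖x‖ * ‖y‖ := mul_le_mul (ha.sqrt_sum_norm_inner_sq_le x S)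
        (hb.sqrt_sum_norm_inner_sq_le y S) (Real.sqrt_nonneg _) (norm_nonneg x)

theorem summable_norm_tsum_and_tsum_norm_tsum_le {ι κ E : Type*} [SeminormedAddCommGroup E]
    {f : ι → κ → E} {c : κ → ℝ} (hc : Summable c)
    (hf : ∀ (S : Finset ι) (j : κ), ∑ s ∈ S, ‖f s j‖ ≤ c j) :
    Summable (fun s => ‖∑' j, f s j‖) ∧ ∑' s, ‖∑' j, f s j‖ ≤ ∑' j, c j := by
  have hfs (s : ι) : Summable fun j => ‖f s j‖ :=
    hc.of_nonneg_of_le (fun _ => norm_nonneg _) fun j => by simpa using hf {s} j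
  have finite_bound (S : Finset ι) : ∑ s ∈ S, ‖∑' j, f s j‖ ≤ ∑' j, c j :=
    calc ∑ s ∈ S, ‖∑' j, f s j‖ ≤ ∑ s ∈ S, ∑' j, ‖f s j‖ :=
          Finset.sum_le_sum fun s _ => norm_tsum_le_tsum_norm (hfs s)
      _ = ∑' j, ∑ s ∈ S, ‖f s j‖ := (Summable.tsum_finsetSum fun s _ => hfs s).symm
      _ ≤ ∑' j, c j :=
          (hc.of_nonneg_of_le (fun _ => Finset.sum_nonneg fun _ _ => norm_nonneg _) (hf S)
            |>.tsum_le_tsum (hf S) hc)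
  have hsum : Summable fun s => ‖∑' j, f s j‖ :=
    summable_of_sum_le (fun _ => norm_nonneg _) finite_bound
  exact ⟨hsum, hsum.tsum_le_of_sum_le finite_bound⟩

/-- **Lemma 1 (coefficient form).** For orthonormal families `a`, `b`, complex coefficients
`g` with `∑ |g j| < ∞`, and unit vectors `u j`, `v j`, the function
`s ↦ |∑ j, g j ⟨a s, u j⟩ ⟨b s, v j⟩|` is summable with sum at most `∑ j, |g j|`. -/
theorem stmt_0 {E F : Type*} [NormedAddCommGroup E] [InnerProductSpace ℂ E]
    [NormedAddCommGroup F] [InnerProductSpace ℂ F] {ι : Type*}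
    (a : ι → E) (b : ι → F) (ha : Orthonormal ℂ a) (hb : Orthonormal ℂ b)
    (g : ℕ → ℂ) (hg : Summable fun j => ‖g j‖)
    (u : ℕ → E) (v : ℕ → F) (hu : ∀ j, ‖u j‖ = 1) (hv : ∀ j, ‖v j‖ = 1) :
    Summable (fun s : ι =>
      ‖∑' j : ℕ, g j * (inner ℂ (a s) (u j) : ℂ) * (inner ℂ (b s) (v j) : ℂ)‖) ∧
    ∑' s : ι, ‖∑' j : ℕ, g j * (inner ℂ (a s) (u j) : ℂ) * (inner ℂ (b s) (v j) : ℂ)‖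
      ≤ ∑' j : ℕ, ‖g j‖ := by
  refine summable_norm_tsum_and_tsum_norm_tsum_le hg fun S j => ?_
  calc ∑ s ∈ S, ‖g j * (inner ℂ (a s) (u j) : ℂ) * (inner ℂ (b s) (v j) : ℂ)‖
      = ‖g j‖ * ∑ s ∈ S, ‖(inner ℂ (a s) (u j) : ℂ)‖ * ‖(inner ℂ (b s) (v j) : ℂ)‖ := by
        simp only [norm_mul, mul_assoc, Finset.mul_sum]
    _ ≤ ‖g j‖ * (‖u j‖ * ‖v j‖) := by
        gcongr
        exact ha.sum_norm_inner_mul_norm_inner_le hb (u j) (v j) S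
    _ = ‖g j‖ := by rw [hu j, hv j, mul_one, mul_one]
end

section
/- Let M be an n×m complex matrix of the form M = ∑_{j∈ℕ} g_j · (u_j v_jᴴ), where the g_j ∈ ℂ satisfy ∑_j |g_j| < ∞, the vectors u_j ∈ ℂⁿ and v_j ∈ ℂᵐ are unit vectors for the Euclidean norm, and u_j v_jᴴ is the rank-one matrix with entries (u_j)_a · conj((v_j)_b). Then ∑_{i} √(μ_i) ≤ ∑_{j∈ℕ} |g_j|, where (μ_i)_{i} are the (nonnegative) eigenvalues of the Hermitian positive-semidefinite matrix MᴴM; that is, the sum of the singular values of M is at most ∑_j |g_j|. -/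
/-!
Let `w i` be an orthonormal eigenbasis of `MᴴM`. The vectors `M w i` are pairwise orthogonal with
`‖M w i‖ = √μᵢ`, so their normalisations `x i` form a Bessel family and
`∑ᵢ √μᵢ = Φ M` for the linear functional `Φ A = ∑ᵢ ⟪x i, A w i⟫`. On a rank-one map
`y ↦ ⟪v, y⟫ u` the functional is `∑ᵢ ⟪v, w i⟫ ⟪x i, u⟫`, of modulus at most `‖u‖ ‖v‖` by
Cauchy–Schwarz and the two Bessel inequalities; evaluating `Φ` termwise on `M = ∑ⱼ gⱼ uⱼ vⱼᴴ`
gives the bound.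
-/

open InnerProductSpace Matrix WithLp

section InnerProductSpace

variable {𝕜 E F ι : Type*} [RCLike 𝕜] [NormedAddCommGroup E] [InnerProductSpace 𝕜 E]
  [NormedAddCommGroup F] [InnerProductSpace 𝕜 F] [Fintype ι]

omit [Fintype ι] in
theorem orthonormal_normalize_of_pairwise_inner_eq_zero {f : ι → E}
    (hf : Pairwise fun i k => ⟪f i, f k⟫_𝕜 = 0) :
    Orthonormal 𝕜 fun i : {i // f i ≠ 0} => (‖f i‖ : 𝕜)⁻¹ • f i := by
  refine ⟨fun i => norm_smul_inv_norm i.2, fun i k hik => ?_⟩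
  simp only [inner_smul_left, inner_smul_right, hf (Subtype.coe_ne_coe.mpr hik), mul_zero]

theorem sum_norm_inner_normalize_sq_le {f : ι → E} (hf : Pairwise fun i k => ⟪f i, f k⟫_𝕜 = 0)
    (y : E) : ∑ i, ‖⟪(‖f i‖ : 𝕜)⁻¹ • f i, y⟫_𝕜‖ ^ 2 ≤ ‖y‖ ^ 2 := by
  classical
  calc ∑ i, ‖⟪(‖f i‖ : 𝕜)⁻¹ • f i, y⟫_𝕜‖ ^ 2
      = ∑ i ∈ Finset.univ.filter (f · ≠ 0), ‖⟪(‖f i‖ : 𝕜)⁻¹ • f i, y⟫_𝕜‖ ^ 2 := by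
        refine (Finset.sum_filter_of_ne ?_).symm
        intro i _ h hfi
        simp [hfi] at h
    _ = ∑ i : {i // f i ≠ 0}, ‖⟪(‖f i‖ : 𝕜)⁻¹ • f i, y⟫_𝕜‖ ^ 2 := by
        rw [← Finset.sum_subtype_eq_sum_filter, Finset.subtype_univ]
    _ ≤ ‖y‖ ^ 2 := (orthonormal_normalize_of_pairwise_inner_eq_zero hf).sum_inner_products_le y

theorem norm_sum_inner_mul_inner_le {x : ι → F} {w : ι → E}
    (hx : ∀ y, ∑ i, ‖⟪x i, y⟫_𝕜‖ ^ 2 ≤ ‖y‖ ^ 2) (hw : ∀ y, ∑ i, ‖⟪w i, y⟫_𝕜‖ ^ 2 ≤ ‖y‖ ^ 2)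
    (u : F) (v : E) : ‖∑ i, ⟪v, w i⟫_𝕜 * ⟪x i, u⟫_𝕜‖ ≤ ‖u‖ * ‖v‖ := by
  calc ‖∑ i, ⟪v, w i⟫_𝕜 * ⟪x i, u⟫_𝕜‖ ≤ ∑ i, ‖⟪x i, u⟫_𝕜‖ * ‖⟪w i, v⟫_𝕜‖ := by
        refine (norm_sum_le _ _).trans (Finset.sum_le_sum fun i _ => ?_)
        rw [norm_mul, norm_inner_symm, mul_comm]
    _ ≤ √(∑ i, ‖⟪x i, u⟫_𝕜‖ ^ 2) * √(∑ i, ‖⟪w i, v⟫_𝕜‖ ^ 2) :=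
        Real.sum_mul_le_sqrt_mul_sqrt _ _ _
    _ ≤ ‖u‖ * ‖v‖ := by
        gcongr
        · exact Real.sqrt_le_iff.mpr ⟨norm_nonneg u, hx u⟩
        · exact Real.sqrt_le_iff.mpr ⟨norm_nonneg v, hw v⟩


theorem inner_inv_norm_smul_self (y : E) : ⟪(‖y‖ : 𝕜)⁻¹ • y, y⟫_𝕜 = ‖y‖ := by
  rcases eq_or_ne y 0 with rfl | hy
  · simp
  · rw [inner_smul_left, inner_self_eq_norm_sq_to_K, map_inv₀, RCLike.conj_ofReal]
    have : (‖y‖ : 𝕜) ≠ 0 := by simpa using hy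
    field_simp

theorem sum_norm_apply_le_of_hasSum_rankOne {β : Type*} {w : ι → E} (hw : Orthonormal 𝕜 w)
    {T : E →L[𝕜] F} (hTw : Pairwise fun i k => ⟪T (w i), T (w k)⟫_𝕜 = 0)
    {g : β → 𝕜} {u : β → F} {v : β → E}
    (hT : HasSum (fun j => g j • rankOne 𝕜 (u j) (v j)) T)
    (hg : Summable fun j => ‖g j‖ * (‖u j‖ * ‖v j‖)) :
    ∑ i, ‖T (w i)‖ ≤ ∑' j, ‖g j‖ * (‖u j‖ * ‖v j‖) := by
  set x : ι → F := fun i => (‖T (w i)‖ : 𝕜)⁻¹ • T (w i)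
  let Φ : (E →L[𝕜] F) →L[𝕜] 𝕜 := ∑ i, (innerSL 𝕜 (x i)).comp (ContinuousLinearMap.apply 𝕜 F (w i))
  have hΦ (A : E →L[𝕜] F) : Φ A = ∑ i, ⟪x i, A (w i)⟫_𝕜 := by simp [Φ]
  have hΦT : Φ T = ((∑ i, ‖T (w i)‖ : ℝ) : 𝕜) := by
    simp only [hΦ, x, inner_inv_norm_smul_self, RCLike.ofReal_sum]
  have hΦR (j : β) : ‖Φ (g j • rankOne 𝕜 (u j) (v j))‖ ≤ ‖g j‖ * (‖u j‖ * ‖v j‖) := by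
    rw [map_smul, norm_smul, hΦ]
    gcongr
    simpa [inner_smul_right] using norm_sum_inner_mul_inner_le
      (sum_norm_inner_normalize_sq_le hTw) (fun y => hw.sum_inner_products_le y) (u j) (v j)
  calc ∑ i, ‖T (w i)‖ = ‖Φ T‖ := by
        rw [hΦT, RCLike.norm_ofReal, abs_of_nonneg (by positivity)]
    _ ≤ _ := (hT.mapL Φ).norm_le_of_bounded hg.hasSum hΦR

end InnerProductSpace

namespace Matrix

variable {𝕜 ι κ : Type*} [RCLike 𝕜] [Fintype ι] [Fintype κ] [DecidableEq κ]

noncomputable def toEuclideanCLE :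
    Matrix ι κ 𝕜 ≃L[𝕜] (EuclideanSpace 𝕜 κ →L[𝕜] EuclideanSpace 𝕜 ι) :=
  (toEuclideanLin.trans LinearMap.toContinuousLinearMap).toContinuousLinearEquiv

theorem toEuclideanCLE_apply (M : Matrix ι κ 𝕜) (y : EuclideanSpace 𝕜 κ) :
    toEuclideanCLE M y = toLp 2 (M *ᵥ ofLp y) := rfl

theorem toEuclideanCLE_vecMulVec (u : ι → 𝕜) (v : κ → 𝕜) :
    toEuclideanCLE (vecMulVec u (star v)) = rankOne 𝕜 (toLp 2 u) (toLp 2 v) := by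
  ext y i
  simp [toEuclideanCLE_apply, EuclideanSpace.inner_eq_star_dotProduct, mulVec, vecMulVec,
    dotProduct, Finset.mul_sum, mul_comm, mul_left_comm]

theorem hasSum_toEuclideanCLE_tsum_smul_vecMulVec {β : Type*} {g : β → 𝕜} {u : β → ι → 𝕜}
    {v : β → κ → 𝕜} (hg : Summable fun j => ‖g j‖ * (‖toLp 2 (u j)‖ * ‖toLp 2 (v j)‖)) :
    HasSum (fun j => g j • rankOne 𝕜 (toLp 2 (u j)) (toLp 2 (v j)))
      (toEuclideanCLE (∑' j, g j • vecMulVec (u j) (star (v j)))) := by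
  have hf (j : β) : toEuclideanCLE (g j • vecMulVec (u j) (star (v j))) =
      g j • rankOne 𝕜 (toLp 2 (u j)) (toLp 2 (v j)) := by
    rw [map_smul, toEuclideanCLE_vecMulVec]
  have hs : Summable fun j => g j • rankOne 𝕜 (toLp 2 (u j)) (toLp 2 (v j)) :=
    .of_norm (by simpa [norm_smul] using hg)
  simp_rw [← hf] at hs ⊢
  exact (toEuclideanCLE.summable.mp hs).hasSum.mapL toEuclideanCLE.toContinuousLinearMap

theorem inner_toEuclideanCLE_toEuclideanCLE (M : Matrix ι κ 𝕜) (y z : EuclideanSpace 𝕜 κ) :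
    ⟪toEuclideanCLE M y, toEuclideanCLE M z⟫_𝕜 = ⟪y, toEuclideanCLE (Mᴴ * M) z⟫_𝕜 := by
  simp only [toEuclideanCLE_apply, ← mulVec_mulVec, EuclideanSpace.inner_eq_star_dotProduct,
    star_mulVec]
  rw [dotProduct_comm _ (star _), dotProduct_mulVec, dotProduct_comm]

theorem inner_toEuclideanCLE_eigenvectorBasis (M : Matrix ι κ 𝕜) (i k : κ) :
    ⟪toEuclideanCLE M ((isHermitian_conjTranspose_mul_self M).eigenvectorBasis i),
      toEuclideanCLE M ((isHermitian_conjTranspose_mul_self M).eigenvectorBasis k)⟫_𝕜 =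
      if i = k then ((isHermitian_conjTranspose_mul_self M).eigenvalues i : 𝕜) else 0 := by
  set hH := isHermitian_conjTranspose_mul_self M
  have heig : toEuclideanCLE (Mᴴ * M) (hH.eigenvectorBasis k) =
      (hH.eigenvalues k : 𝕜) • hH.eigenvectorBasis k := by
    rw [toEuclideanCLE_apply, hH.mulVec_eigenvectorBasis, RCLike.real_smul_eq_coe_smul (K := 𝕜)]
    rfl
  rw [inner_toEuclideanCLE_toEuclideanCLE, heig, inner_smul_right,
    orthonormal_iff_ite.mp hH.eigenvectorBasis.orthonormal]
  split_ifs with h <;> simp [h]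

theorem sqrt_eigenvalues_conjTranspose_mul_self (M : Matrix ι κ 𝕜) (i : κ) :
    √((isHermitian_conjTranspose_mul_self M).eigenvalues i) =
      ‖toEuclideanCLE M ((isHermitian_conjTranspose_mul_self M).eigenvectorBasis i)‖ := by
  have h := inner_toEuclideanCLE_eigenvectorBasis M i i
  rw [if_pos rfl, inner_self_eq_norm_sq_to_K] at h
  rw [← RCLike.ofReal_pow, RCLike.ofReal_inj] at h
  rw [← h, Real.sqrt_sq (norm_nonneg _)]

end Matrix

/-- **Corollary 2.** For a matrix `M = ∑ j, g j • (u j) (v j)ᴴ` with `∑ |g j| < ∞` and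
`u j`, `v j` unit vectors for the Euclidean norm, the sum of the singular values of `M`
(the square roots of the eigenvalues of `MᴴM`) is at most `∑ j, |g j|`. -/
theorem stmt_1 {n m : ℕ} (g : ℕ → ℂ) (hg : Summable fun j => ‖g j‖)
    (u : ℕ → Fin n → ℂ) (v : ℕ → Fin m → ℂ)
    (hu : ∀ j, ∑ a : Fin n, ‖u j a‖ ^ 2 = 1) (hv : ∀ j, ∑ b : Fin m, ‖v j b‖ ^ 2 = 1)
    (M : Matrix (Fin n) (Fin m) ℂ)
    (hM : M = ∑' j : ℕ, g j • Matrix.vecMulVec (u j) (fun b => (starRingEnd ℂ) (v j b))) :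
    ∑ i : Fin m, Real.sqrt ((Matrix.isHermitian_conjTranspose_mul_self M).eigenvalues i)
      ≤ ∑' j : ℕ, ‖g j‖ := by
  have hunit {k : ℕ} {f : Fin k → ℂ} (hf : ∑ a, ‖f a‖ ^ 2 = 1) : ‖toLp 2 f‖ = 1 := by
    simp [EuclideanSpace.norm_eq, hf]
  have hweight (j : ℕ) : ‖g j‖ * (‖toLp 2 (u j)‖ * ‖toLp 2 (v j)‖) = ‖g j‖ := by
    rw [hunit (hu j), hunit (hv j), mul_one, mul_one]
  have hg' : Summable fun j => ‖g j‖ * (‖toLp 2 (u j)‖ * ‖toLp 2 (v j)‖) := by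
    simpa only [hweight] using hg
  have hT := hasSum_toEuclideanCLE_tsum_smul_vecMulVec hg'
  rw [← show M = ∑' j, g j • vecMulVec (u j) (star (v j)) from hM] at hT
  set w := (isHermitian_conjTranspose_mul_self M).eigenvectorBasis
  have horth : Pairwise fun i k => ⟪toEuclideanCLE M (w i), toEuclideanCLE M (w k)⟫_ℂ = 0 :=
    fun i k hik => (inner_toEuclideanCLE_eigenvectorBasis M i k).trans (if_neg hik)
  calc ∑ i, √((isHermitian_conjTranspose_mul_self M).eigenvalues i)
      = ∑ i, ‖toEuclideanCLE M (w i)‖ := by simp_rw [sqrt_eigenvalues_conjTranspose_mul_self, w]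
    _ ≤ ∑' j, ‖g j‖ * (‖toLp 2 (u j)‖ * ‖toLp 2 (v j)‖) :=
        sum_norm_apply_le_of_hasSum_rankOne w.orthonormal horth hT hg'
    _ = ∑' j, ‖g j‖ := tsum_congr hweight
end

section
/- Define c : ℝ → ℝ by c(α) = (2α/(1−α)) · ( (2α−1)^{(2α−1)/(2−2α)} − (2α−1)^{1/(2−2α)} ) for α ≠ 1, using real powers. Then: (i) c(α) → 2 as α → 1/2 from the right; (ii) c(α) → 4/e as α → 1 within the punctured neighborhood {α > 1/2, α ≠ 1}; (iii) c(α) → 2 as α → +∞. -/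
/-!
Put `t = 2α − 1 > 0`. Since `1/(1−t) = t/(1−t) + 1`, the bracket in `c(α)` is `(1−t)·t^{t/(1−t)}`,
so `c(α) = 2(t+1)·t^{t/(1−t)} = 2(t+1)/t · t^{1/(1−t)}`. As `t → 0⁺`,
`t^{t/(1−t)} = exp(t log t/(1−t)) → 1`; as `t → 1`, `log t/(1−t) → −1` (the derivative of `log`
at `1`), so `t^{1/(1−t)} → e⁻¹`; and as `t → ∞`, `t^{1/(1−t)} → 1`.
-/

open Filter Topology Real

theorem rpow_div_one_sub_mul_self {t : ℝ} (ht : 0 < t) :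
    t ^ (t / (1 - t)) * t = t ^ (1 / (1 - t)) := by
  rcases eq_or_ne t 1 with rfl | ht1
  · simp
  have hexp : 1 / (1 - t) = t / (1 - t) + 1 := by
    field_simp [sub_ne_zero.mpr ht1.symm]
    ring
  rw [hexp, rpow_add_one ht.ne']

theorem tendsto_rpow_div_one_sub_nhdsGT_zero :
    Tendsto (fun t : ℝ => t ^ (t / (1 - t))) (𝓝[>] 0) (𝓝 1) := by
  have hlog : Tendsto (fun t : ℝ => log t * t) (𝓝[>] 0) (𝓝 0) := by
    simpa only [rpow_one] using tendsto_log_mul_rpow_nhdsGT_zero zero_lt_one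
  have hinv : Tendsto (fun t : ℝ => 1 / (1 - t)) (𝓝[>] 0) (𝓝 1) := by
    simpa using ((continuous_const.sub continuous_id).tendsto' (0 : ℝ) 1 (by simp)).inv₀
      one_ne_zero |>.mono_left nhdsWithin_le_nhds
  have hexp := (hlog.mul hinv).rexp
  rw [zero_mul, exp_zero] at hexp
  refine hexp.congr' (eventually_nhdsWithin_of_forall fun t (ht : 0 < t) => ?_)
  show _ = t ^ _
  rw [rpow_def_of_pos ht, mul_one_div, mul_div_assoc]

theorem tendsto_rpow_one_div_one_sub_nhdsNE_one :
    Tendsto (fun t : ℝ => t ^ (1 / (1 - t))) (𝓝[≠] 1) (𝓝 (exp (-1))) := by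
  have hslope : Tendsto (slope log 1) (𝓝[≠] 1) (𝓝 1) := by
    simpa using hasDerivAt_iff_tendsto_slope.mp (hasDerivAt_log one_ne_zero)
  refine hslope.neg.rexp.congr' ?_
  filter_upwards [self_mem_nhdsWithin,
    (lt_mem_nhds zero_lt_one).filter_mono nhdsWithin_le_nhds] with t (ht1 : t ≠ 1) ht
  rw [rpow_def_of_pos ht, slope_def_field, log_one, sub_zero, mul_one_div, ← div_neg, neg_sub]

theorem tendsto_rpow_one_div_one_sub_atTop :
    Tendsto (fun t : ℝ => t ^ (1 / (1 - t))) atTop (𝓝 1) := by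
  simpa [neg_add_eq_sub] using tendsto_rpow_div_mul_add 1 (-1) 1 (by norm_num)

/-- `c(α)` written in the variable `t = 2α − 1`. -/
noncomputable def sieConst (t : ℝ) : ℝ := 2 * (t + 1) * t ^ (t / (1 - t))

theorem sieConst_eq {t : ℝ} (ht : 0 < t) :
    sieConst t = 2 * (t + 1) / t * t ^ (1 / (1 - t)) := by
  rw [sieConst, ← rpow_div_one_sub_mul_self ht]
  field_simp

theorem sieConst_two_mul_sub_one {α : ℝ} (hα : 1 / 2 < α) (hα1 : α ≠ 1) :
    sieConst (2 * α - 1) = (2*α/(1 - α)) *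
        ((2*α - 1) ^ ((2*α - 1)/(2 - 2*α)) - (2*α - 1) ^ (1/(2 - 2*α))) := by
  have ht : 0 < 2 * α - 1 := by linarith
  have h1 : 1 - α ≠ 0 := sub_ne_zero.mpr hα1.symm
  rw [show 2 - 2 * α = 1 - (2 * α - 1) by ring, ← rpow_div_one_sub_mul_self ht, sieConst]
  field_simp
  ring

theorem tendsto_sieConst_nhdsGT_zero : Tendsto sieConst (𝓝[>] 0) (𝓝 2) := by
  have hlin : Tendsto (fun t : ℝ => 2 * (t + 1)) (𝓝[>] 0) (𝓝 2) := by
    simpa using ((continuous_id.add continuous_const).const_mul (2 : ℝ)).tendsto' 0 2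
      (by norm_num) |>.mono_left nhdsWithin_le_nhds
  have hlim := hlin.mul tendsto_rpow_div_one_sub_nhdsGT_zero
  rw [mul_one] at hlim
  exact hlim

theorem tendsto_sieConst_nhdsNE_one : Tendsto sieConst (𝓝[≠] 1) (𝓝 (4 / exp 1)) := by
  have hrat : Tendsto (fun t : ℝ => 2 * (t + 1) / t) (𝓝[≠] 1) (𝓝 4) := by
    have hcont : ContinuousAt (fun t : ℝ => 2 * (t + 1) / t) 1 :=
      ((continuous_id.add continuous_const).const_mul (2 : ℝ)).continuousAt.div
        continuousAt_id one_ne_zero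
    convert hcont.tendsto.mono_left nhdsWithin_le_nhds using 2
    norm_num
  have hlim := hrat.mul tendsto_rpow_one_div_one_sub_nhdsNE_one
  rw [exp_neg, ← div_eq_mul_inv] at hlim
  refine hlim.congr' ?_
  filter_upwards [(lt_mem_nhds zero_lt_one).filter_mono nhdsWithin_le_nhds] with t ht
  exact (sieConst_eq ht).symm

theorem tendsto_sieConst_atTop : Tendsto sieConst atTop (𝓝 2) := by
  have hrat : Tendsto (fun t : ℝ => 2 + 2 * t⁻¹) atTop (𝓝 2) := by
    simpa using (tendsto_inv_atTop_zero.const_mul (2 : ℝ)).const_add (2 : ℝ)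
  have hlim := hrat.mul tendsto_rpow_one_div_one_sub_atTop
  rw [mul_one] at hlim
  refine hlim.congr' ?_
  filter_upwards [eventually_gt_atTop 0] with t ht
  rw [sieConst_eq ht]
  field_simp

theorem tendsto_two_mul_sub_one_nhdsGT_half :
    Tendsto (fun α : ℝ => 2 * α - 1) (𝓝[>] (1 / 2)) (𝓝[>] 0) := by
  refine tendsto_nhdsWithin_iff.2 ⟨(Continuous.tendsto' (by fun_prop) _ _ (by norm_num)).mono_left
    nhdsWithin_le_nhds, eventually_nhdsWithin_of_forall fun α (hα : 1 / 2 < α) => ?_⟩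
  show 0 < 2 * α - 1
  linarith

theorem tendsto_two_mul_sub_one_nhdsNE_one :
    Tendsto (fun α : ℝ => 2 * α - 1) (𝓝[≠] 1) (𝓝[≠] 1) := by
  refine tendsto_nhdsWithin_iff.2 ⟨(Continuous.tendsto' (by fun_prop) _ _ (by norm_num)).mono_left
    nhdsWithin_le_nhds, eventually_nhdsWithin_of_forall fun α (hα : α ≠ 1) h => ?_⟩
  exact hα (by linarith [show 2 * α - 1 = 1 from h])

/-- **Limiting values of the Spectral-SIE constant `c_α`.** With
`c(α) = (2α/(1−α))·((2α−1)^{(2α−1)/(2−2α)} − (2α−1)^{1/(2−2α)})` (real powers), one has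
`c(α) → 2` as `α → 1/2⁺`, `c(α) → 4/e` as `α → 1` within `{α > 1/2, α ≠ 1}`, and
`c(α) → 2` as `α → +∞`. -/
theorem stmt_5 (c : ℝ → ℝ)
    (hc : ∀ α : ℝ, α ≠ 1 →
      c α = (2*α/(1 - α)) *
        ((2*α - 1) ^ ((2*α - 1)/(2 - 2*α)) - (2*α - 1) ^ (1/(2 - 2*α)))) :
    Tendsto c (nhdsWithin (1/2) (Set.Ioi (1/2))) (nhds 2) ∧
    Tendsto c (nhdsWithin 1 (Set.Ioi (1/2) \ {1})) (nhds (4 / Real.exp 1)) ∧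
    Tendsto c atTop (nhds 2) := by
  have of_sieConst : ∀ {l : Filter ℝ} {L : ℝ}, (∀ᶠ α in l, 1 / 2 < α ∧ α ≠ 1) →
      Tendsto (sieConst ∘ fun α => 2 * α - 1) l (𝓝 L) → Tendsto c l (𝓝 L) :=
    fun hl h => h.congr' <| hl.mono fun α ⟨hα, hα1⟩ => by
      rw [Function.comp_apply, hc α hα1, sieConst_two_mul_sub_one hα hα1]
  refine ⟨of_sieConst ?_ (tendsto_sieConst_nhdsGT_zero.comp tendsto_two_mul_sub_one_nhdsGT_half),
    of_sieConst ?_ (tendsto_sieConst_nhdsNE_one.comp <| tendsto_two_mul_sub_one_nhdsNE_one.mono_left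
      (nhdsWithin_mono _ (Set.sdiff_subset_compl _ _))),
    of_sieConst ?_ (tendsto_sieConst_atTop.comp <|
      tendsto_atTop_add_const_right _ _ (tendsto_id.const_mul_atTop two_pos))⟩
  · filter_upwards [self_mem_nhdsWithin,
      (gt_mem_nhds one_half_lt_one).filter_mono nhdsWithin_le_nhds] with α hα hα1
    exact ⟨hα, hα1.ne⟩
  · exact self_mem_nhdsWithin
  · filter_upwards [eventually_gt_atTop 1] with α hα
    exact ⟨by linarith, hα.ne'⟩
end

section
/- Let M ≥ 1 be a natural number and let a, b : {0,1,…,M} → ℂ satisfy ∑_{j=0}^{M} |a_j|² = 1 and ∑_{j=0}^{M} |b_j|² = 1. Then ∑_{j=1}^{M} |a_j|·|b_j| + M·|a_0|·|b_0| ≤ √(1+(M−1)|a_0|²) · √(1+(M−1)|b_0|²) ≤ M. -/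
/-- **Cauchy–Schwarz estimate in the proof of Proposition 4** (spectral-entangling
strength of `V_{A₀B₀} = ∑_{j=1}^M J(|j,j⟩⟨0,0| + h.c.)` equals `MJ`): if
`∑_{j=0}^M |a_j|² = ∑_{j=0}^M |b_j|² = 1` then
`∑_{j=1}^M |a_j||b_j| + M|a_0||b_0| ≤ √(1+(M−1)|a_0|²)·√(1+(M−1)|b_0|²) ≤ M`. -/
theorem stmt_6 (M : ℕ) (hM : 1 ≤ M) (a b : ℕ → ℂ)
    (ha : ∑ j ∈ Finset.range (M + 1), ‖a j‖ ^ 2 = 1)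
    (hb : ∑ j ∈ Finset.range (M + 1), ‖b j‖ ^ 2 = 1) :
    ∑ j ∈ Finset.Icc 1 M, ‖a j‖ * ‖b j‖ + M * (‖a 0‖ * ‖b 0‖)
      ≤ Real.sqrt (1 + ((M : ℝ) - 1) * ‖a 0‖ ^ 2) *
          Real.sqrt (1 + ((M : ℝ) - 1) * ‖b 0‖ ^ 2) ∧
    Real.sqrt (1 + ((M : ℝ) - 1) * ‖a 0‖ ^ 2) *
        Real.sqrt (1 + ((M : ℝ) - 1) * ‖b 0‖ ^ 2) ≤ M := by
  have hset : Finset.range (M + 1) = insert 0 (Finset.Icc 1 M) := by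
    ext j; simp [Finset.mem_range, Finset.mem_Icc]; omega
  have h0 : (0 : ℕ) ∉ Finset.Icc 1 M := by simp
  have ha' : ∑ j ∈ Finset.Icc 1 M, ‖a j‖ ^ 2 = 1 - ‖a 0‖ ^ 2 := by
    rw [hset, Finset.sum_insert h0] at ha; linarith
  have hb' : ∑ j ∈ Finset.Icc 1 M, ‖b j‖ ^ 2 = 1 - ‖b 0‖ ^ 2 := by
    rw [hset, Finset.sum_insert h0] at hb; linarith
  set f : ℕ → ℝ := fun j => if j = 0 then Real.sqrt M * ‖a 0‖ else ‖a j‖ with hf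
  set g : ℕ → ℝ := fun j => if j = 0 then Real.sqrt M * ‖b 0‖ else ‖b j‖ with hg
  have hMnn : (0:ℝ) ≤ M := Nat.cast_nonneg _
  have hsqM : Real.sqrt M * Real.sqrt M = M := Real.mul_self_sqrt hMnn
  have key := Real.sum_mul_le_sqrt_mul_sqrt (Finset.range (M + 1)) f g
  rw [hset, Finset.sum_insert h0, Finset.sum_insert h0, Finset.sum_insert h0] at key
  have hfg0 : f 0 * g 0 = M * (‖a 0‖ * ‖b 0‖) := by
    show Real.sqrt M * ‖a 0‖ * (Real.sqrt M * ‖b 0‖) = _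
    rw [show Real.sqrt M * ‖a 0‖ * (Real.sqrt M * ‖b 0‖)
        = (Real.sqrt M * Real.sqrt M) * (‖a 0‖ * ‖b 0‖) by ring, hsqM]
  have hfsum : ∀ j ∈ Finset.Icc 1 M, f j * g j = ‖a j‖ * ‖b j‖ := by
    intro j hj
    have : j ≠ 0 := by simp [Finset.mem_Icc] at hj; omega
    simp [hf, hg, this]
  have hfsq : ∀ j ∈ Finset.Icc 1 M, f j ^ 2 = ‖a j‖ ^ 2 := by
    intro j hj; have : j ≠ 0 := by simp [Finset.mem_Icc] at hj; omega
    simp [hf, this]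
  have hgsq : ∀ j ∈ Finset.Icc 1 M, g j ^ 2 = ‖b j‖ ^ 2 := by
    intro j hj; have : j ≠ 0 := by simp [Finset.mem_Icc] at hj; omega
    simp [hg, this]
  have hf0sq : f 0 ^ 2 = M * ‖a 0‖ ^ 2 := by
    simp only [hf, if_pos rfl, mul_pow, Real.sq_sqrt hMnn]
  have hg0sq : g 0 ^ 2 = M * ‖b 0‖ ^ 2 := by
    simp only [hg, if_pos rfl, mul_pow, Real.sq_sqrt hMnn]
  rw [Finset.sum_congr rfl hfsum, Finset.sum_congr rfl hfsq, Finset.sum_congr rfl hgsq,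
    ha', hb', hfg0, hf0sq, hg0sq] at key
  have e1 : (M:ℝ) * ‖a 0‖ ^ 2 + (1 - ‖a 0‖ ^ 2) = 1 + ((M : ℝ) - 1) * ‖a 0‖ ^ 2 := by ring
  have e2 : (M:ℝ) * ‖b 0‖ ^ 2 + (1 - ‖b 0‖ ^ 2) = 1 + ((M : ℝ) - 1) * ‖b 0‖ ^ 2 := by ring
  rw [e1, e2] at key
  constructor
  · linarith [key]
  · have ha0 : ‖a 0‖ ^ 2 ≤ 1 := by
      rw [hset, Finset.sum_insert h0] at ha
      have : (0:ℝ) ≤ ∑ j ∈ Finset.Icc 1 M, ‖a j‖ ^ 2 :=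
        Finset.sum_nonneg fun _ _ => sq_nonneg _
      linarith
    have hb0 : ‖b 0‖ ^ 2 ≤ 1 := by
      rw [hset, Finset.sum_insert h0] at hb
      have : (0:ℝ) ≤ ∑ j ∈ Finset.Icc 1 M, ‖b j‖ ^ 2 :=
        Finset.sum_nonneg fun _ _ => sq_nonneg _
      linarith
    have hM1 : (0:ℝ) ≤ (M:ℝ) - 1 := by
      have : (1:ℝ) ≤ M := by exact_mod_cast hM
      linarith
    have t1 : 1 + ((M : ℝ) - 1) * ‖a 0‖ ^ 2 ≤ M := by nlinarith
    have t2 : 1 + ((M : ℝ) - 1) * ‖b 0‖ ^ 2 ≤ M := by nlinarith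
    calc Real.sqrt (1 + ((M : ℝ) - 1) * ‖a 0‖ ^ 2) *
        Real.sqrt (1 + ((M : ℝ) - 1) * ‖b 0‖ ^ 2)
        ≤ Real.sqrt M * Real.sqrt M :=
          mul_le_mul (Real.sqrt_le_sqrt t1) (Real.sqrt_le_sqrt t2)
            (Real.sqrt_nonneg _) (Real.sqrt_nonneg _)
      _ = M := hsqM
end

section
/- Let M be a real number with M ≥ 1 and let z be a real number with 0 ≤ z ≤ 1/2. Then cos z + √M · sin z > 0 and log(cos z + √M · sin z) ≥ √M · z − ((M+1)/2) · z². -/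
/-!
With `g z = cos z + s sin z` and `h z = log (g z) - s z + (s² + 1) z² / 2` one has `h 0 = 0` and
`h' z = (s² + 1) (z g z - sin z) / g z`. On `[0, π/2]` we have `g ≥ cos + sin ≥ cos² + sin² = 1`,
so `z g z ≥ z ≥ sin z`; hence `h` is monotone there and `h z ≥ h 0 = 0`.
-/

open Real Set

lemma one_le_cos_add_mul_sin {s z : ℝ} (hs : 1 ≤ s) (hz : z ∈ Icc 0 (π / 2)) :
    1 ≤ cos z + s * sin z := by
  have hcos : 0 ≤ cos z := cos_nonneg_of_mem_Icc ⟨by linarith [pi_pos, hz.1], hz.2⟩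
  have hsin : 0 ≤ sin z := sin_nonneg_of_nonneg_of_le_pi hz.1 (by linarith [pi_pos, hz.2])
  nlinarith [sin_sq_add_cos_sq z, sin_le_one z, cos_le_one z]

lemma mul_sub_mul_sq_le_log_cos_add_mul_sin {s z : ℝ} (hs : 1 ≤ s) (hz : z ∈ Icc 0 (π / 2)) :
    s * z - (s ^ 2 + 1) / 2 * z ^ 2 ≤ log (cos z + s * sin z) := by
  set g : ℝ → ℝ := fun x ↦ cos x + s * sin x
  have hg : ∀ x ∈ Icc 0 (π / 2), 1 ≤ g x := fun x hx ↦ one_le_cos_add_mul_sin hs hx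
  have hderiv : ∀ x ∈ Icc 0 (π / 2), HasDerivAt
      (fun x ↦ log (g x) - s * x + (s ^ 2 + 1) / 2 * x ^ 2)
      ((s ^ 2 + 1) * (x * g x - sin x) / g x) x := by
    intro x hx
    have hgx : g x ≠ 0 := by linarith [hg x hx]
    have hg' : HasDerivAt g (-sin x + s * cos x) x :=
      (hasDerivAt_cos x).add ((hasDerivAt_sin x).const_mul s)
    refine (((hg'.log hgx).sub ((hasDerivAt_id x).const_mul s)).add
      ((hasDerivAt_pow 2 x).const_mul ((s ^ 2 + 1) / 2))).congr_deriv ?_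
    field_simp
    simp only [g]
    ring
  have hmono : MonotoneOn (fun x ↦ log (g x) - s * x + (s ^ 2 + 1) / 2 * x ^ 2)
      (Icc 0 (π / 2)) := by
    refine monotoneOn_of_hasDerivWithinAt_nonneg (convex_Icc 0 (π / 2))
      (fun x hx ↦ (hderiv x hx).continuousAt.continuousWithinAt)
      (fun x hx ↦ (hderiv x (interior_subset hx)).hasDerivWithinAt) fun x hx ↦ ?_
    have hx := interior_subset hx
    have hgx := hg x hx
    have hsin : sin x ≤ x * g x := by nlinarith [sin_le hx.1, mul_le_mul_of_nonneg_left hgx hx.1]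
    positivity
  have hz_ge_zero := hmono ⟨le_rfl, by positivity⟩ hz hz.1
  simp only [g, cos_zero, sin_zero, mul_zero, add_zero, log_one] at hz_ge_zero
  linarith

/-- **Analytic core of Proposition 4.** For real `M ≥ 1` and `0 ≤ z ≤ 1/2`,
`cos z + √M·sin z > 0` and `log(cos z + √M·sin z) ≥ √M·z − ((M+1)/2)·z²`. -/
theorem stmt_7 (M : ℝ) (hM : 1 ≤ M) (z : ℝ) (hz0 : 0 ≤ z) (hz1 : z ≤ 1/2) :
    0 < Real.cos z + Real.sqrt M * Real.sin z ∧
    Real.sqrt M * z - (M + 1)/2 * z ^ 2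
      ≤ Real.log (Real.cos z + Real.sqrt M * Real.sin z) := by
  have hs : 1 ≤ √M := one_le_sqrt.mpr hM
  have hz : z ∈ Icc 0 (π / 2) := ⟨hz0, by linarith [pi_gt_three]⟩
  refine ⟨by linarith [one_le_cos_add_mul_sin hs hz], ?_⟩
  simpa [sq_sqrt (zero_le_one.trans hM)] using mul_sub_mul_sq_le_log_cos_add_mul_sin hs hz
end

section
/- Let α be a real number with 0 < α ≤ 1/2, let D₀ ≥ 1 be a natural number, and let x be a real number with 0 ≤ x ≤ 1 and x ≤ 1/(2·D₀·α). Then ∑_{s=1}^{D₀} ((1−x)^{2α})^{s−1} ≥ D₀·α, where (1−x)^{2α} is the real power. -/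
/-- **Geometric-series bound in the proof of Proposition 5.** For `0 < α ≤ 1/2`,
`D₀ ≥ 1`, and `0 ≤ x ≤ 1` with `x ≤ 1/(2D₀α)`, one has
`∑_{s=1}^{D₀} ((1−x)^{2α})^{s−1} ≥ D₀·α`, where `(1−x)^{2α}` is the real power. -/
theorem stmt_9 (α : ℝ) (hα0 : 0 < α) (hα1 : α ≤ 1/2) (D₀ : ℕ) (hD : 1 ≤ D₀)
    (x : ℝ) (hx0 : 0 ≤ x) (hx1 : x ≤ 1) (hx2 : x ≤ 1 / (2 * D₀ * α)) :
    (D₀ : ℝ) * α ≤ ∑ s ∈ Finset.range D₀, ((1 - x) ^ (2 * α)) ^ s := by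
  have hDpos : (0:ℝ) < D₀ := by exact_mod_cast Nat.pos_of_ne_zero (by omega)
  have hq : (0:ℝ) < 2 * D₀ * α := by positivity
  have hxq : 2 * D₀ * α * x ≤ 1 := by
    have := (div_le_div_iff₀ hq hq).mp (le_of_eq (rfl : (1:ℝ)/(2*D₀*α) = 1/(2*D₀*α)))
    calc 2 * D₀ * α * x ≤ 2 * D₀ * α * (1 / (2*D₀*α)) := by
          exact mul_le_mul_of_nonneg_left hx2 (le_of_lt hq)
      _ = 1 := by field_simp
  rcases eq_or_lt_of_le hx0 with h0 | hxpos
  · -- x = 0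
    rw [← h0]
    simp only [sub_zero, Real.one_rpow, one_pow, Finset.sum_const, Finset.card_range,
      nsmul_eq_mul, mul_one]
    nlinarith
  rcases eq_or_lt_of_le hx1 with h1 | hxlt
  · -- x = 1
    subst h1
    have : ((1:ℝ) - 1) ^ (2*α) = 0 := by
      rw [sub_self, Real.zero_rpow (by positivity)]
    rw [this]
    have hsum : ∑ s ∈ Finset.range D₀, (0:ℝ) ^ s = 1 := by
      rw [geom_sum_eq (by norm_num)]
      simp [zero_pow (by omega : D₀ ≠ 0)]
    rw [hsum]
    nlinarith
  -- 0 < x < 1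
  have hb0 : (0:ℝ) < 1 - x := by linarith
  set y := (1 - x) ^ (2*α) with hy
  have hy0 : 0 ≤ y := Real.rpow_nonneg (le_of_lt hb0) _
  have hylt1 : y < 1 := Real.rpow_lt_one (le_of_lt hb0) (by linarith) (by linarith)
  have hyge : 1 - x ≤ y := by
    calc (1 - x) = (1 - x) ^ (1:ℝ) := (Real.rpow_one _).symm
      _ ≤ (1 - x) ^ (2*α) := Real.rpow_le_rpow_of_exponent_ge hb0 (by linarith) (by linarith)
  -- bound y ^ D₀ ≤ 1 - D₀ * α * x
  have hpow : y ^ D₀ = (1 - x) ^ (2 * α * D₀) := by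
    rw [hy, ← Real.rpow_natCast ((1 - x) ^ (2 * α)) D₀, ← Real.rpow_mul (le_of_lt hb0)]

  have hexp1 : (1 - x) ≤ Real.exp (-x) := by
    linarith [Real.add_one_le_exp (-x)]
  have hstep : (1 - x) ^ (2 * α * D₀) ≤ Real.exp (-(x * (2 * α * D₀))) := by
    calc (1 - x) ^ (2 * α * D₀) ≤ (Real.exp (-x)) ^ (2 * α * D₀) :=
          Real.rpow_le_rpow (le_of_lt hb0) hexp1 (by positivity)
      _ = Real.exp (-x * (2 * α * D₀)) := (Real.exp_mul _ _).symm
      _ = Real.exp (-(x * (2 * α * D₀))) := by ring_nf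
  set t : ℝ := x * (2 * α * D₀) with ht
  have ht0 : 0 ≤ t := by positivity
  have ht1 : t ≤ 1 := by rw [ht]; nlinarith
  have hexp2 : Real.exp (-t) ≤ 1 - t / 2 := by
    rw [Real.exp_neg]
    rw [inv_le_iff_one_le_mul₀ (Real.exp_pos t)]
    nlinarith [Real.add_one_le_exp t, Real.exp_pos t]
  have hyD : y ^ D₀ ≤ 1 - t / 2 := by
    rw [hpow]; exact hstep.trans hexp2
  -- geometric sum
  rw [geom_sum_eq (ne_of_lt hylt1)]
  rw [show (y ^ D₀ - 1) / (y - 1) = (1 - y ^ D₀) / (1 - y) by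
    rw [div_eq_div_iff (by linarith) (by linarith)]; ring]
  rw [le_div_iff₀ (by linarith)]
  have h1y : 1 - y ≤ x := by linarith
  have : (D₀:ℝ) * α * (1 - y) ≤ (D₀:ℝ) * α * x := by
    exact mul_le_mul_of_nonneg_left h1y (by positivity)
  have hDx : (D₀:ℝ) * α * x = t / 2 := by rw [ht]; ring
  nlinarith
end

section
/- Let N ≥ 1 and D be natural numbers. Then the following two quantities (infima of sets of nonnegative reals) are equal: (i) the Kolmogorov width d_D(B₁ᴺ, ℓ∞ᴺ) := inf over all linear subspaces X ⊆ ℝᴺ with dim X ≤ D of sup over x ∈ ℝᴺ with ∑_{i=1}^N |x_i| ≤ 1 of inf over y ∈ X of max_{1≤i≤N} |x_i − y_i|; and (ii) the best rank-D max-norm approximation of the identity, inf over all real N×N matrices W with rank W ≤ D of max_{1≤s,s'≤N} |δ_{s,s'} − W_{s,s'}|, where δ_{s,s'} is the Kronecker delta. -/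
/-!
The distance to a subspace `X` is a seminorm, hence convex, and the `ℓ₁`-ball is the convex hull
of the `±eₛ`; so the worst point of the ball is a standard basis vector, and the width of `X` is
`maxₛ dist(eₛ, X)`. Taking nearest points `yₛ ∈ X` as the rows of `W` (and conversely `X` the row
space of `W`) identifies the infimum of this over `X` with the best rank-`D` entrywise
approximation of the identity matrix.
-/

open Metric

theorem Pi.iSup_abs_sub_eq_dist {ι : Type*} [Fintype ι] (x y : ι → ℝ) :
    ⨆ i, |x i - y i| = dist x y := by
  refine le_antisymm (Real.iSup_le (fun i => ?_) dist_nonneg) ?_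
  · rw [← Real.dist_eq]
    exact dist_le_pi_dist x y i
  · refine (dist_pi_le_iff (Real.iSup_nonneg fun _ => abs_nonneg _)).2 fun i => ?_
    rw [Real.dist_eq]
    exact le_ciSup (Finite.bddAbove_range fun i => |x i - y i|) i

theorem Submodule.infDist_sum_smul_le_iSup {ι E : Type*} [Fintype ι] [NormedAddCommGroup E]
    [NormedSpace ℝ E] [FiniteDimensional ℝ E] (X : Submodule ℝ E) (v : ι → E) {c : ι → ℝ}
    (hc : ∑ s, |c s| ≤ 1) :
    infDist (∑ s, c s • v s) X ≤ ⨆ s, infDist (v s) X := by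
  choose y hyX hy using fun s =>
    X.closed_of_finiteDimensional.exists_infDist_eq_dist ⟨0, X.zero_mem⟩ (v s)
  set M := ⨆ s, infDist (v s) X
  have hM : ∀ s, dist (v s) (y s) ≤ M := fun s =>
    hy s ▸ le_ciSup (Finite.bddAbove_range fun s => infDist (v s) X) s
  have hM₀ : 0 ≤ M := Real.iSup_nonneg fun _ => infDist_nonneg
  calc infDist (∑ s, c s • v s) X
      ≤ dist (∑ s, c s • v s) (∑ s, c s • y s) :=
        infDist_le_dist_of_mem (X.sum_mem fun s _ => X.smul_mem _ (hyX s))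
    _ = ‖∑ s, c s • (v s - y s)‖ := by
        simp only [dist_eq_norm, smul_sub, Finset.sum_sub_distrib]
    _ ≤ ∑ s, |c s| * M := by
        refine (norm_sum_le _ _).trans (Finset.sum_le_sum fun s _ => ?_)
        rw [norm_smul, Real.norm_eq_abs, ← dist_eq_norm]
        exact mul_le_mul_of_nonneg_left (hM s) (abs_nonneg _)
    _ ≤ M := by
        rw [← Finset.sum_mul]
        exact mul_le_of_le_one_left hM₀ hc

theorem Submodule.iSup_l1Ball_infDist_eq_iSup_single {ι : Type*} [Fintype ι] [DecidableEq ι]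
    (X : Submodule ℝ (ι → ℝ)) :
    ⨆ x : {x : ι → ℝ // ∑ i, |x i| ≤ 1}, infDist x.1 X =
      ⨆ s, infDist (Pi.single s 1 : ι → ℝ) X := by
  have hball (x : {x : ι → ℝ // ∑ i, |x i| ≤ 1}) :
      infDist x.1 X ≤ ⨆ s, infDist (Pi.single s 1 : ι → ℝ) X := by
    simpa [← Pi.single_smul, Finset.univ_sum_single] using
      X.infDist_sum_smul_le_iSup (fun s => (Pi.single s 1 : ι → ℝ)) x.2
  refine le_antisymm (Real.iSup_le hball (Real.iSup_nonneg fun _ => infDist_nonneg)) ?_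
  refine Real.iSup_le (fun s => ?_) (Real.iSup_nonneg fun _ => infDist_nonneg)
  exact le_ciSup (f := fun x : {x : ι → ℝ // ∑ i, |x i| ≤ 1} => infDist x.1 X)
    ⟨_, Set.forall_mem_range.2 hball⟩ ⟨Pi.single s 1, by simp [Pi.single_apply, apply_ite]⟩

theorem iInf_subspace_iSup_infDist_eq_iInf_rank_iSup_dist {m n : Type*} [Fintype m] [Fintype n]
    (v : m → n → ℝ) (D : ℕ) :
    ⨅ X : {X : Submodule ℝ (n → ℝ) // Module.finrank ℝ X ≤ D}, ⨆ s, infDist (v s) X.1 =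
      ⨅ W : {W : Matrix m n ℝ // W.rank ≤ D}, ⨆ s, dist (v s) (W.1 s) := by
  have : Nonempty {X : Submodule ℝ (n → ℝ) // Module.finrank ℝ X ≤ D} := ⟨⟨⊥, by simp⟩⟩
  have : Nonempty {W : Matrix m n ℝ // W.rank ≤ D} := ⟨⟨0, by simp⟩⟩
  refine le_antisymm (ciInf_mono_of_forall_exists ⟨0, ?_⟩ fun W => ?_)
    (ciInf_mono_of_forall_exists ⟨0, ?_⟩ fun X => ?_)
  · rintro _ ⟨X, rfl⟩
    exact Real.iSup_nonneg fun _ => infDist_nonneg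
  · refine ⟨⟨Submodule.span ℝ (Set.range W.1), W.1.rank_eq_finrank_span_row ▸ W.2⟩, ?_⟩
    exact ciSup_mono (Finite.bddAbove_range _) fun s =>
      infDist_le_dist_of_mem (Submodule.subset_span (Set.mem_range_self s))
  · rintro _ ⟨W, rfl⟩
    exact Real.iSup_nonneg fun _ => dist_nonneg
  · choose y hyX hy using fun s =>
      X.1.closed_of_finiteDimensional.exists_infDist_eq_dist ⟨0, X.1.zero_mem⟩ (v s)
    have hrank : (Matrix.of y).rank ≤ D := by
      rw [Matrix.rank_eq_finrank_span_row]
      exact (Submodule.finrank_mono (Submodule.span_le.2 (Set.range_subset_iff.2 hyX))).trans X.2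
    exact ⟨⟨Matrix.of y, hrank⟩, (iSup_congr hy).ge⟩

theorem stmt_10_general (N D : ℕ) :
    (⨅ X : {X : Submodule ℝ (Fin N → ℝ) // Module.finrank ℝ ↥X ≤ D},
      ⨆ x : {x : Fin N → ℝ // ∑ i : Fin N, |x i| ≤ 1},
        ⨅ y : ↥X.1, ⨆ i : Fin N, |x.1 i - (y : Fin N → ℝ) i|)
    = ⨅ W : {W : Matrix (Fin N) (Fin N) ℝ // W.rank ≤ D},
        ⨆ s : Fin N, ⨆ s' : Fin N,
          |(if s = s' then (1 : ℝ) else 0) - W.1 s s'| := by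
  have hrow (W : Matrix (Fin N) (Fin N) ℝ) (s : Fin N) :
      ⨆ s', |(if s = s' then (1 : ℝ) else 0) - W s s'| =
        dist (Pi.single s 1 : Fin N → ℝ) (W s) := by
    rw [← Pi.iSup_abs_sub_eq_dist]
    simp only [Pi.single_apply, eq_comm]
  have hinfDist (X : Submodule ℝ (Fin N → ℝ)) (x : Fin N → ℝ) :
      ⨅ y : X, dist x (y : Fin N → ℝ) = infDist x X :=
    infDist_eq_iInf.symm
  simp_rw [hrow, Pi.iSup_abs_sub_eq_dist, hinfDist, Submodule.iSup_l1Ball_infDist_eq_iSup_single]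
  exact iInf_subspace_iSup_infDist_eq_iInf_rank_iSup_dist _ D

/-- **Kolmogorov-width identity.** The Kolmogorov width `d_D(B₁ᴺ, ℓ∞ᴺ)` — the infimum
over linear subspaces `X ⊆ ℝᴺ` of dimension at most `D` of the supremum over the unit
`ℓ₁`-ball of the `ℓ∞`-distance to `X` — equals the best approximation of the identity
matrix by rank-`≤ D` matrices in the entrywise max norm. -/
theorem stmt_10 (N D : ℕ) (hN : 1 ≤ N) :
    (⨅ X : {X : Submodule ℝ (Fin N → ℝ) // Module.finrank ℝ ↥X ≤ D},
      ⨆ x : {x : Fin N → ℝ // ∑ i : Fin N, |x i| ≤ 1},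
        ⨅ y : ↥X.1, ⨆ i : Fin N, |x.1 i - (y : Fin N → ℝ) i|)
    = ⨅ W : {W : Matrix (Fin N) (Fin N) ℝ // W.rank ≤ D},
        ⨆ s : Fin N, ⨆ s' : Fin N,
          |(if s = s' then (1 : ℝ) else 0) - W.1 s s'| :=
  stmt_10_general N D
end

section
/- Let κ > 0 and C > 0 be reals, and let (g_j)_{j≥1} be a summable sequence of nonnegative reals such that for every integer N ≥ 1, ∑_{j=N}^∞ g_j ≤ C·N^{−κ}. Then for every α with 1/(2(1+κ)) < α ≤ 1/2, the sequence (g_j^{2α})_{j≥1} is summable and ∑_{j=1}^∞ g_j^{2α} ≤ 2^{1−2α}·C^{2α} / (1 − 2^{1−2α(1+κ)}). -/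
/-!
Cut `{1, 2, …}` into the dyadic blocks `[2ⁿ, 2ⁿ⁺¹)` and put `p = 2α ∈ (0, 1]`. On a block of
`2ⁿ` terms, concavity of `x ↦ xᵖ` gives `∑ g_jᵖ ≤ (2ⁿ)^(1-p) (∑ g_j)ᵖ`, and the block sum is at
most the tail from `2ⁿ`, hence at most `C·2^(-nκ)`. So the `n`-th block contributes at most
`Cᵖ rⁿ` with `r = 2^(1 - p(1+κ))`, and `r < 1` is exactly the condition `α > 1/(2(1+κ))`.
Summing the geometric series gives `Cᵖ/(1 - r)`, which is below the claimed bound since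
`2^(1-p) ≥ 1`.
-/

open Finset Real

lemma Real.sum_rpow_le_card_rpow_mul_rpow_sum {ι : Type*} (s : Finset ι) {f : ι → ℝ}
    (hf : ∀ i ∈ s, 0 ≤ f i) {p : ℝ} (hp0 : 0 < p) (hp1 : p ≤ 1) :
    ∑ i ∈ s, f i ^ p ≤ (#s : ℝ) ^ (1 - p) * (∑ i ∈ s, f i) ^ p := by
  have hfp : ∀ i ∈ s, 0 ≤ f i ^ p := fun i hi => rpow_nonneg (hf i hi) p
  have hsum : 0 ≤ ∑ i ∈ s, f i ^ p := sum_nonneg hfp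
  -- the convex inequality for the exponent `1/p ≥ 1`, applied to the numbers `f i ^ p`
  have key := rpow_sum_le_const_mul_sum_rpow_of_nonneg s (one_le_one_div hp0 hp1) hfp
  have hinv : ∀ i ∈ s, (f i ^ p) ^ (1 / p) = f i := fun i hi => by
    rw [one_div, rpow_rpow_inv (hf i hi) hp0.ne']
  rw [sum_congr rfl hinv] at key
  calc ∑ i ∈ s, f i ^ p = ((∑ i ∈ s, f i ^ p) ^ (1 / p)) ^ p := by
        rw [one_div, rpow_inv_rpow hsum hp0.ne']
    _ ≤ ((#s : ℝ) ^ (1 / p - 1) * ∑ i ∈ s, f i) ^ p :=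
        rpow_le_rpow (rpow_nonneg hsum _) key hp0.le
    _ = (#s : ℝ) ^ (1 - p) * (∑ i ∈ s, f i) ^ p := by
        rw [mul_rpow (rpow_nonneg (Nat.cast_nonneg _) _) (sum_nonneg hf),
          ← rpow_mul (Nat.cast_nonneg _)]
        congr 2
        field_simp

lemma Nat.card_Ico_two_pow (n : ℕ) : #(Ico (2 ^ n) (2 ^ (n + 1))) = 2 ^ n := by
  rw [Nat.card_Ico, pow_succ]
  omega

lemma sum_Ico_le_tsum_nat_add {f : ℕ → ℝ} {N : ℕ} (hf : ∀ j, N ≤ j → 0 ≤ f j)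
    (hs : Summable fun k => f (k + N)) (M : ℕ) :
    ∑ j ∈ Ico N M, f j ≤ ∑' k, f (k + N) := by
  rw [sum_Ico_eq_sum_range]
  simp_rw [add_comm N]
  exact hs.sum_le_tsum _ fun k _ => hf _ (Nat.le_add_left N k)

lemma sum_Ico_one_two_pow_eq_sum_blocks (f : ℕ → ℝ) (m : ℕ) :
    ∑ j ∈ Ico 1 (2 ^ m), f j = ∑ n ∈ range m, ∑ j ∈ Ico (2 ^ n) (2 ^ (n + 1)), f j := by
  induction m with
  | zero => simp
  | succ m ih =>
    rw [← sum_Ico_consecutive _ Nat.one_le_two_pow (Nat.pow_le_pow_right two_pos m.le_succ),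
      ih, sum_range_succ]

lemma summable_and_tsum_le_of_dyadic_blocks {f a : ℕ → ℝ} (hf : ∀ j, 1 ≤ j → 0 ≤ f j)
    (ha : Summable a) (hblock : ∀ n, ∑ j ∈ Ico (2 ^ n) (2 ^ (n + 1)), f j ≤ a n) :
    Summable (fun j => f (j + 1)) ∧ ∑' j, f (j + 1) ≤ ∑' n, a n := by
  have hf' : ∀ j, 0 ≤ f (j + 1) := fun j => hf _ (Nat.le_add_left 1 j)
  have ha0 : ∀ n, 0 ≤ a n := fun n =>
    (sum_nonneg fun j hj => hf j (Nat.one_le_two_pow.trans (mem_Ico.mp hj).1)).trans (hblock n)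
  have hpartial : ∀ m, ∑ i ∈ range m, f (i + 1) ≤ ∑' n, a n := fun m =>
    calc ∑ i ∈ range m, f (i + 1) = ∑ j ∈ Ico 1 (m + 1), f j := by
          rw [sum_Ico_eq_sum_range, Nat.add_sub_cancel]
          simp_rw [add_comm 1]
      _ ≤ ∑ j ∈ Ico 1 (2 ^ m), f j :=
          sum_le_sum_of_subset_of_nonneg (Ico_subset_Ico le_rfl Nat.lt_two_pow_self)
            fun j hj _ => hf j (mem_Ico.mp hj).1
      _ = ∑ n ∈ range m, ∑ j ∈ Ico (2 ^ n) (2 ^ (n + 1)), f j :=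
          sum_Ico_one_two_pow_eq_sum_blocks f m
      _ ≤ ∑ n ∈ range m, a n := sum_le_sum fun n _ => hblock n
      _ ≤ ∑' n, a n := ha.sum_le_tsum _ fun n _ => ha0 n
  exact ⟨summable_of_sum_range_le hf' hpartial, tsum_le_of_sum_range_le hf' hpartial⟩

lemma sum_Ico_two_pow_rpow_le {g : ℕ → ℝ} {C κ p : ℝ} (hC : 0 ≤ C) (hp0 : 0 < p) (hp1 : p ≤ 1)
    (n : ℕ) (hg : ∀ j ∈ Ico (2 ^ n) (2 ^ (n + 1)), 0 ≤ g j)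
    (hblock : ∑ j ∈ Ico (2 ^ n) (2 ^ (n + 1)), g j ≤ C * ((2 : ℝ) ^ n) ^ (-κ)) :
    ∑ j ∈ Ico (2 ^ n) (2 ^ (n + 1)), g j ^ p ≤ C ^ p * ((2 : ℝ) ^ (1 - p * (1 + κ))) ^ n := by
  have h2n : (0 : ℝ) < 2 ^ n := by positivity
  calc ∑ j ∈ Ico (2 ^ n) (2 ^ (n + 1)), g j ^ p
      ≤ ((2 : ℝ) ^ n) ^ (1 - p) * (∑ j ∈ Ico (2 ^ n) (2 ^ (n + 1)), g j) ^ p := by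
        have h := sum_rpow_le_card_rpow_mul_rpow_sum _ hg hp0 hp1
        rwa [Nat.card_Ico_two_pow, Nat.cast_pow, Nat.cast_ofNat] at h
    _ ≤ ((2 : ℝ) ^ n) ^ (1 - p) * (C * ((2 : ℝ) ^ n) ^ (-κ)) ^ p := by
        gcongr
        exact sum_nonneg hg
    _ = C ^ p * ((2 : ℝ) ^ (1 - p * (1 + κ))) ^ n := by
        rw [rpow_pow_comm zero_le_two, mul_rpow hC (rpow_nonneg h2n.le _), ← rpow_mul h2n.le,
          mul_left_comm, ← rpow_add h2n]
        ring_nf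

/-- **Computational core of Lemma 6 (α-SE strength under power-law tails).** If the
nonnegative summable sequence `(g_j)_{j≥1}` satisfies `∑_{j≥N} g_j ≤ C·N^{−κ}` for all
`N ≥ 1`, then for every `α` with `1/(2(1+κ)) < α ≤ 1/2` the sequence `(g_j^{2α})_{j≥1}`
is summable and `∑_{j≥1} g_j^{2α} ≤ 2^{1−2α}·C^{2α}/(1 − 2^{1−2α(1+κ)})`.
Here `g j` denotes `g_j` (with `g 0` irrelevant) and powers are real powers. -/
theorem stmt_11 (κ C : ℝ) (hκ : 0 < κ) (hC : 0 < C) (g : ℕ → ℝ)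
    (hg_nonneg : ∀ j, 1 ≤ j → 0 ≤ g j)
    (hg_sum : Summable fun j : ℕ => g (j + 1))
    (htail : ∀ N : ℕ, 1 ≤ N → ∑' k : ℕ, g (k + N) ≤ C * (N : ℝ) ^ (-κ)) :
    ∀ α : ℝ, 1 / (2 * (1 + κ)) < α → α ≤ 1/2 →
      Summable (fun j : ℕ => g (j + 1) ^ (2 * α)) ∧
      ∑' j : ℕ, g (j + 1) ^ (2 * α)
        ≤ (2 : ℝ) ^ (1 - 2 * α) * C ^ (2 * α) / (1 - (2 : ℝ) ^ (1 - 2 * α * (1 + κ))) := by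
  intro α hα_lower hα_upper
  set p := 2 * α
  have hp0 : 0 < p := by
    have : 0 < 1 / (2 * (1 + κ)) := by positivity
    linarith
  have hp1 : p ≤ 1 := by linarith
  have hexp : 1 < p * (1 + κ) := by
    rw [div_lt_iff₀ (by positivity)] at hα_lower
    linarith
  set r : ℝ := 2 ^ (1 - p * (1 + κ))
  have hr0 : 0 ≤ r := by positivity
  have hr1 : r < 1 := rpow_lt_one_of_one_lt_of_neg one_lt_two (by linarith)
  have hblock : ∀ n, ∑ j ∈ Ico (2 ^ n) (2 ^ (n + 1)), g j ^ p ≤ C ^ p * r ^ n := by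
    intro n
    have hN : 1 ≤ 2 ^ n := Nat.one_le_two_pow
    have hg : ∀ j, 2 ^ n ≤ j → 0 ≤ g j := fun j hj => hg_nonneg j (hN.trans hj)
    have hshift : Summable fun k => g (k + 2 ^ n) := by
      simpa [add_assoc, Nat.sub_add_cancel hN] using
        (summable_nat_add_iff (2 ^ n - 1)).mpr hg_sum
    refine sum_Ico_two_pow_rpow_le hC.le hp0 hp1 n (fun j hj => hg j (mem_Ico.mp hj).1) ?_
    calc ∑ j ∈ Ico (2 ^ n) (2 ^ (n + 1)), g j ≤ ∑' k, g (k + 2 ^ n) :=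
          sum_Ico_le_tsum_nat_add hg hshift _
      _ ≤ C * ((2 : ℝ) ^ n) ^ (-κ) := by exact_mod_cast htail _ hN
  obtain ⟨hsummable, htsum⟩ := summable_and_tsum_le_of_dyadic_blocks
    (fun j hj => rpow_nonneg (hg_nonneg j hj) p)
    ((summable_geometric_of_lt_one hr0 hr1).mul_left _) hblock
  refine ⟨hsummable, htsum.trans ?_⟩
  rw [tsum_mul_left, tsum_geometric_of_lt_one hr0 hr1, ← div_eq_mul_inv]
  gcongr
  exact le_mul_of_one_le_left (by positivity) (one_le_rpow one_le_two (by linarith))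
end

section
/- Let κ > 0 and C ≥ 1 be reals, and let (λ_s)_{s≥1} be a nonincreasing sequence of nonnegative reals with ∑_{s=1}^∞ λ_s² = 1 and such that for every integer D ≥ 1, ∑_{s=D+1}^∞ λ_s² ≤ C²·D^{−2κ}. Then the entanglement entropy is bounded as −∑_{s=1}^∞ λ_s² · log(λ_s²) ≤ c_{κ,1}·log C + c_{κ,2}, where c_{κ,1} = (2 − 2^{−2κ})/(κ(1 − 2^{−2κ})) and c_{κ,2} = (6 + 2κ)·log 2 / (1 − 2^{−2κ})², with the convention 0·log 0 = 0 and log the natural logarithm. -/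
/-!
Group the squared Schmidt coefficients `p s = f s ^ 2` into dyadic blocks of `2 ^ k` consecutive
indices. The tail bound at `D = 2 ^ k - 1` bounds the mass `q_k` of block `k` by `C² x^(k-1)`, where
`x = 2^(-2κ)`, hence by `x^(k-K)` once `K ≥ log C / (κ log 2) + 1`. The inequality
`-p log p ≤ -p log γ + γ/e`, applied on block `k` with `γ = x^(k-K)/2^k` (truncated subtraction),
bounds the entropy of the block by `q_k (k log 2 + (k-K) log(1/x)) + x^(k-K)/e`. Summing over `k`
with `∑ q_k ≤ 1`, `∑ j x^j = x/(1-x)²` and `∑ x^j = 1/(1-x)` gives the constants.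
-/

open Finset Real

namespace Real

lemma negMulLog_le_exp_neg_one {y : ℝ} (hy : 0 ≤ y) : negMulLog y ≤ exp (-1) := by
  rcases hy.eq_or_lt with rfl | hy
  · simp [(exp_pos _).le]
  · simpa [negMulLog, exp_log hy, mul_comm] using mul_exp_neg_le_exp_neg_one (-log y)

lemma negMulLog_le_neg_mul_log_add {p γ : ℝ} (hp : 0 ≤ p) (hγ : 0 < γ) :
    negMulLog p ≤ -(p * log γ) + γ * exp (-1) := by
  have hsplit : negMulLog p = -(p * log γ) + γ * negMulLog (p / γ) := by
    conv_lhs => rw [← div_mul_cancel₀ p hγ.ne', negMulLog_mul]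
    simp only [negMulLog]
    field_simp
    ring
  rw [hsplit]
  gcongr
  exact negMulLog_le_exp_neg_one (div_nonneg hp hγ.le)

lemma sum_negMulLog_le {ι : Type*} {s : Finset ι} (hs : s.Nonempty) {p : ι → ℝ}
    (hp : ∀ i ∈ s, 0 ≤ p i) {t : ℝ} (ht : 0 < t) :
    ∑ i ∈ s, negMulLog (p i) ≤ (∑ i ∈ s, p i) * (log #s - log t) + t * exp (-1) := by
  have hcard : (0 : ℝ) < #s := by exact_mod_cast hs.card_pos
  calc ∑ i ∈ s, negMulLog (p i)
      ≤ ∑ i ∈ s, (-(p i * log (t / #s)) + t / #s * exp (-1)) :=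
        sum_le_sum fun i hi => negMulLog_le_neg_mul_log_add (hp i hi) (by positivity)
    _ = (∑ i ∈ s, p i) * (log #s - log t) + t * exp (-1) := by
        have hlog : log (t / #s) = -(log #s - log t) := by rw [log_div ht.ne' hcard.ne']; ring
        simp only [sum_add_distrib, sum_const, nsmul_eq_mul, hlog, mul_neg, neg_neg, ← sum_mul]
        field_simp

end Real

-- In 1-based Schmidt indices, block `k` is `2 ^ k ≤ s < 2 ^ (k + 1)`.
def dyadicBlock (k : ℕ) : Finset ℕ := Ico (2 ^ k - 1) (2 ^ (k + 1) - 1)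

lemma card_dyadicBlock (k : ℕ) : #(dyadicBlock k) = 2 ^ k := by
  have := Nat.one_le_two_pow (n := k)
  rw [dyadicBlock, Nat.card_Ico, pow_succ]
  omega

lemma sum_range_sum_dyadicBlock {M : Type*} [AddCommMonoid M] (h : ℕ → M) (n : ℕ) :
    ∑ k ∈ range n, ∑ s ∈ dyadicBlock k, h s = ∑ s ∈ range (2 ^ n - 1), h s := by
  induction n with
  | zero => simp
  | succ n ih =>
    have := Nat.one_le_two_pow (n := n)
    rw [sum_range_succ, ih, range_eq_Ico, range_eq_Ico, dyadicBlock,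
      sum_Ico_consecutive _ (Nat.zero_le _) (by rw [pow_succ]; omega)]

lemma sum_dyadicBlock_le_of_tail {p : ℕ → ℝ} (hp0 : ∀ s, 0 ≤ p s) (hsum : Summable p)
    {c a : ℝ} (hc : 0 ≤ c) (ha : 0 ≤ a)
    (htail : ∀ D : ℕ, 1 ≤ D → ∑' s, p (s + D) ≤ c * (D : ℝ) ^ (-a)) {k : ℕ} (hk : 1 ≤ k) :
    ∑ s ∈ dyadicBlock k, p s ≤ c * ((2 : ℝ) ^ (-a)) ^ (k - 1) := by
  have hpow : 2 ^ (k - 1) ≤ 2 ^ k - 1 := by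
    have : 2 ^ k = 2 * 2 ^ (k - 1) := by rw [← pow_succ']; congr; omega
    have := Nat.one_le_two_pow (n := k - 1)
    omega
  calc ∑ s ∈ dyadicBlock k, p s = ∑ i ∈ range (2 ^ k), p (2 ^ k - 1 + i) := by
        rw [dyadicBlock, sum_Ico_eq_sum_range, pow_succ]
        congr 2
        omega
    _ ≤ ∑' i, p (i + (2 ^ k - 1)) := by
        simp only [add_comm (2 ^ k - 1)]
        exact ((summable_nat_add_iff _).2 hsum).sum_le_tsum _ fun i _ => hp0 _
    _ ≤ c * ((2 ^ k - 1 : ℕ) : ℝ) ^ (-a) := htail _ (Nat.one_le_two_pow.trans hpow)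
    _ ≤ c * ((2 ^ (k - 1) : ℕ) : ℝ) ^ (-a) := by
        refine mul_le_mul_of_nonneg_left ?_ hc
        exact rpow_le_rpow_of_nonpos (by positivity) (by exact_mod_cast hpow) (by linarith)
    _ = c * ((2 : ℝ) ^ (-a)) ^ (k - 1) := by
        rw [Nat.cast_pow, Nat.cast_ofNat, rpow_pow_comm zero_le_two]

lemma sum_range_comp_tsub_le {g : ℕ → ℝ} (hg : ∀ j, 0 ≤ g j) (hs : Summable g) (n K : ℕ) :
    ∑ k ∈ range n, g (k - K) ≤ K * g 0 + ∑' j, g j :=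
  calc ∑ k ∈ range n, g (k - K)
      ≤ ∑ k ∈ range (K + n), g (k - K) :=
        sum_le_sum_of_subset_of_nonneg (range_mono (by omega)) fun _ _ _ => hg _
    _ = K * g 0 + ∑ j ∈ range n, g j := by
        rw [sum_range_add,
          sum_congr rfl fun k hk => by rw [Nat.sub_eq_zero_of_le (mem_range.1 hk).le]]
        simp
    _ ≤ K * g 0 + ∑' j, g j := by gcongr; exact hs.sum_le_tsum _ fun j _ => hg j

lemma sum_dyadicBlock_negMulLog_le {p : ℕ → ℝ} (hp0 : ∀ s, 0 ≤ p s) {x : ℝ} (hx0 : 0 < x)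
    (hx1 : x ≤ 1) {K k : ℕ} (hdecay : K < k → ∑ s ∈ dyadicBlock k, p s ≤ x ^ (k - K)) :
    ∑ s ∈ dyadicBlock k, negMulLog (p s) ≤ log 2 * K * ∑ s ∈ dyadicBlock k, p s
      + (log 2 - log x) * ((k - K : ℕ) * x ^ (k - K)) + x ^ (k - K) * exp (-1) := by
  set q := ∑ s ∈ dyadicBlock k, p s
  have hne : (dyadicBlock k).Nonempty := card_pos.1 (by rw [card_dyadicBlock]; positivity)
  have hk : (k : ℝ) ≤ K + (k - K : ℕ) := by norm_cast; omega
  have hq : (k - K : ℕ) * q ≤ (k - K : ℕ) * x ^ (k - K) := by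
    rcases le_or_gt k K with h | h
    · simp [Nat.sub_eq_zero_of_le h]
    · gcongr; exact hdecay h
  calc ∑ s ∈ dyadicBlock k, negMulLog (p s)
      ≤ q * (log #(dyadicBlock k) - log (x ^ (k - K))) + x ^ (k - K) * exp (-1) :=
        sum_negMulLog_le hne (fun s _ => hp0 s) (by positivity)
    _ = log 2 * k * q + (-log x) * ((k - K : ℕ) * q) + x ^ (k - K) * exp (-1) := by
        rw [card_dyadicBlock, Nat.cast_pow, log_pow, log_pow]; push_cast; ring
    _ ≤ _ := by
        have hq0 : 0 ≤ q := sum_nonneg fun s _ => hp0 s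
        have hlogx : 0 ≤ -log x := neg_nonneg.2 (log_nonpos hx0.le hx1)
        have hlog2 : 0 ≤ log 2 := log_nonneg one_le_two
        nlinarith [mul_le_mul_of_nonneg_left hk (mul_nonneg hlog2 hq0),
          mul_le_mul_of_nonneg_left hq hlogx, mul_le_mul_of_nonneg_left hq hlog2]

theorem tsum_negMulLog_le_of_sum_dyadicBlock_le {p : ℕ → ℝ} (hp0 : ∀ s, 0 ≤ p s)
    (hp1 : ∀ n, ∑ s ∈ range n, p s ≤ 1) {x : ℝ} (hx0 : 0 < x) (hx1 : x < 1) {K : ℕ}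
    (hdecay : ∀ k, K < k → ∑ s ∈ dyadicBlock k, p s ≤ x ^ (k - K)) :
    ∑' s, negMulLog (p s) ≤
      log 2 * K + (log 2 - log x) * (x / (1 - x) ^ 2) + (K + (1 - x)⁻¹) * exp (-1) := by
  have hp_le_one (s : ℕ) : p s ≤ 1 :=
    (single_le_sum (fun i _ => hp0 i) (self_mem_range_succ s)).trans (hp1 _)
  have hG : HasSum (fun j : ℕ => (j : ℝ) * x ^ j) (x / (1 - x) ^ 2) :=
    hasSum_coe_mul_geometric_of_norm_lt_one (by rwa [norm_of_nonneg hx0.le])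
  have hgeom : HasSum (fun j => x ^ j) (1 - x)⁻¹ := hasSum_geometric_of_lt_one hx0.le hx1
  refine tsum_le_of_sum_range_le (fun s => negMulLog_nonneg (hp0 s) (hp_le_one s)) fun n => ?_
  calc ∑ s ∈ range n, negMulLog (p s)
      ≤ ∑ s ∈ range (2 ^ n - 1), negMulLog (p s) :=
        sum_le_sum_of_subset_of_nonneg (range_mono (by have := Nat.lt_two_pow_self (n := n); omega))
          fun s _ _ => negMulLog_nonneg (hp0 s) (hp_le_one s)
    _ = ∑ k ∈ range n, ∑ s ∈ dyadicBlock k, negMulLog (p s) := (sum_range_sum_dyadicBlock _ n).symm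
    _ ≤ ∑ k ∈ range n, (log 2 * K * ∑ s ∈ dyadicBlock k, p s
          + (log 2 - log x) * ((k - K : ℕ) * x ^ (k - K)) + x ^ (k - K) * exp (-1)) :=
        sum_le_sum fun k _ => sum_dyadicBlock_negMulLog_le hp0 hx0 hx1.le (hdecay k)
    _ = log 2 * K * ∑ s ∈ range (2 ^ n - 1), p s
          + (log 2 - log x) * ∑ k ∈ range n, (k - K : ℕ) * x ^ (k - K)
          + (∑ k ∈ range n, x ^ (k - K)) * exp (-1) := by
        simp only [sum_add_distrib, ← mul_sum, ← sum_mul, sum_range_sum_dyadicBlock]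
    _ ≤ _ := by
        have hG' := sum_range_comp_tsub_le (fun j => by positivity) hG.summable n K
        have hgeom' := sum_range_comp_tsub_le (fun j => by positivity) hgeom.summable n K
        simp only [hG.tsum_eq, hgeom.tsum_eq, Nat.cast_zero, mul_zero, zero_add, pow_zero,
          mul_one] at hG' hgeom'
        have hlogx : 0 ≤ log 2 - log x := by
          linarith [log_nonpos hx0.le hx1.le, log_nonneg (one_le_two (α := ℝ))]
        linarith [mul_le_of_le_one_right (by positivity : 0 ≤ log 2 * K) (hp1 (2 ^ n - 1)),
          mul_le_mul_of_nonneg_left hG' hlogx, mul_le_mul_of_nonneg_right hgeom' (exp_pos (-1)).le]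

lemma entropy_constants_le {κ x ℓ : ℝ} {K : ℕ} (hκ : 0 < κ) (hx0 : 0 ≤ x) (hx1 : x < 1)
    (hℓ : 0 ≤ ℓ) (hK : (K : ℝ) ≤ ℓ / (κ * log 2) + 2) :
    log 2 * K + (log 2 + 2 * κ * log 2) * (x / (1 - x) ^ 2) + (K + (1 - x)⁻¹) * exp (-1)
      ≤ (2 - x) / (κ * (1 - x)) * ℓ + (6 + 2 * κ) * log 2 / (1 - x) ^ 2 := by
  have hL : exp (-1) ≤ log 2 := by linarith [exp_neg_one_lt_half, log_two_gt_d9]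
  have hL0 : 0 < log 2 := log_pos one_lt_two
  have hy : 0 < 1 - x := sub_pos.2 hx1
  have hK' : (log 2 + exp (-1)) * K ≤ 2 * ℓ / κ + 4 * log 2 :=
    calc (log 2 + exp (-1)) * K ≤ 2 * log 2 * (ℓ / (κ * log 2) + 2) := by
          rw [two_mul]; gcongr
      _ = 2 * ℓ / κ + 4 * log 2 := by field_simp; ring
  have hℓ' : 2 * ℓ / κ ≤ (2 - x) / (κ * (1 - x)) * ℓ := by
    rw [mul_div_right_comm]
    refine mul_le_mul_of_nonneg_right ?_ hℓ
    rw [div_le_div_iff₀ hκ (by positivity)]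
    nlinarith
  have hconst : 4 * log 2 + (log 2 + 2 * κ * log 2) * (x / (1 - x) ^ 2) + (1 - x)⁻¹ * exp (-1)
      ≤ (6 + 2 * κ) * log 2 / (1 - x) ^ 2 := by
    have : (1 - x)⁻¹ * exp (-1) ≤ (1 - x)⁻¹ * log 2 := by gcongr
    suffices 4 * log 2 + (log 2 + 2 * κ * log 2) * (x / (1 - x) ^ 2) + (1 - x)⁻¹ * log 2
        ≤ (6 + 2 * κ) * log 2 / (1 - x) ^ 2 by linarith
    rw [← sub_nonneg]
    have e : (6 + 2 * κ) * log 2 / (1 - x) ^ 2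
        - (4 * log 2 + (log 2 + 2 * κ * log 2) * (x / (1 - x) ^ 2) + (1 - x)⁻¹ * log 2)
        = log 2 * (1 + 2 * κ * (1 - x) + 4 * x * (2 - x)) / (1 - x) ^ 2 := by
      field_simp; ring
    rw [e]
    exact div_nonneg (mul_nonneg hL0.le (by nlinarith)) (by positivity)
  linarith

theorem stmt_12_general (κ C : ℝ) (hκ : 0 < κ) (hC : 1 ≤ C) (f : ℕ → ℝ)
    (hf_sum : Summable fun s : ℕ => f s ^ 2)
    (hnorm : ∑' s : ℕ, f s ^ 2 = 1)
    (htail : ∀ D : ℕ, 1 ≤ D → ∑' s : ℕ, f (s + D) ^ 2 ≤ C ^ 2 * (D : ℝ) ^ (-(2 * κ))) :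
    -∑' s : ℕ, f s ^ 2 * Real.log (f s ^ 2)
      ≤ (2 - (2 : ℝ) ^ (-(2 * κ))) / (κ * (1 - (2 : ℝ) ^ (-(2 * κ)))) * Real.log C
        + (6 + 2 * κ) * Real.log 2 / (1 - (2 : ℝ) ^ (-(2 * κ))) ^ 2 := by
  set x : ℝ := (2 : ℝ) ^ (-(2 * κ)) with hx
  have hx0 : 0 < x := rpow_pos_of_pos two_pos _
  have hx1 : x < 1 := rpow_lt_one_of_one_lt_of_neg one_lt_two (by linarith)
  have hlogx : log x = -(2 * κ * log 2) := by rw [hx, log_rpow two_pos]; ring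
  set N : ℕ := ⌈log C / (κ * log 2)⌉₊
  have hCx : C ^ 2 * x ^ N ≤ 1 := by
    have hN : log C ≤ κ * log 2 * N := (div_le_iff₀' (by positivity)).1 (Nat.le_ceil _)
    rw [← log_nonpos_iff (by positivity), log_mul (by positivity) (by positivity), log_pow, log_pow,
      hlogx, Nat.cast_ofNat]
    linarith
  have hdecay (k : ℕ) (hk : N + 1 < k) : ∑ s ∈ dyadicBlock k, f s ^ 2 ≤ x ^ (k - (N + 1)) :=
    calc ∑ s ∈ dyadicBlock k, f s ^ 2 ≤ C ^ 2 * x ^ (k - 1) :=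
          sum_dyadicBlock_le_of_tail (fun s => sq_nonneg _) hf_sum (by positivity) (by positivity)
            htail (by omega)
      _ = C ^ 2 * x ^ N * x ^ (k - (N + 1)) := by rw [mul_assoc, ← pow_add]; congr 2; omega
      _ ≤ x ^ (k - (N + 1)) := mul_le_of_le_one_left (by positivity) hCx
  have hmass (n : ℕ) : ∑ s ∈ range n, f s ^ 2 ≤ 1 :=
    hnorm ▸ hf_sum.sum_le_tsum _ fun s _ => sq_nonneg _
  have hK : ((N + 1 : ℕ) : ℝ) ≤ log C / (κ * log 2) + 2 := by
    push_cast
    linarith [Nat.ceil_lt_add_one (div_nonneg (log_nonneg hC) (by positivity) :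
      0 ≤ log C / (κ * log 2))]
  have hentropy := tsum_negMulLog_le_of_sum_dyadicBlock_le (fun s => sq_nonneg (f s)) hmass hx0 hx1
    hdecay
  rw [hlogx, sub_neg_eq_add] at hentropy
  rw [← tsum_neg]
  simpa [negMulLog_eq_neg] using
    hentropy.trans (entropy_constants_le hκ hx0.le hx1 (log_nonneg hC) hK)

/-- **Approximation implies entropy bound (Lemma in the proof of Theorem 3).** If a
normalized nonincreasing Schmidt spectrum `(λ_s)_{s≥1}` (here `f s = λ_{s+1}`, 0-indexed)
satisfies the tail bounds `∑_{s>D} λ_s² ≤ C²·D^{−2κ}` for all `D ≥ 1`, then the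
entanglement entropy obeys `−∑ λ_s² log λ_s² ≤ c_{κ,1} log C + c_{κ,2}` with
`c_{κ,1} = (2−2^{−2κ})/(κ(1−2^{−2κ}))` and `c_{κ,2} = (6+2κ)log 2/(1−2^{−2κ})²`.
(`Real.log 0 = 0`, so the convention `0·log 0 = 0` is automatic.) -/
theorem stmt_12 (κ C : ℝ) (hκ : 0 < κ) (hC : 1 ≤ C) (f : ℕ → ℝ)
    (hf_anti : Antitone f) (hf_nonneg : ∀ s, 0 ≤ f s)
    (hf_sum : Summable fun s : ℕ => f s ^ 2)
    (hnorm : ∑' s : ℕ, f s ^ 2 = 1)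
    (htail : ∀ D : ℕ, 1 ≤ D → ∑' s : ℕ, f (s + D) ^ 2 ≤ C ^ 2 * (D : ℝ) ^ (-(2 * κ))) :
    -∑' s : ℕ, f s ^ 2 * Real.log (f s ^ 2)
      ≤ (2 - (2 : ℝ) ^ (-(2 * κ))) / (κ * (1 - (2 : ℝ) ^ (-(2 * κ)))) * Real.log C
        + (6 + 2 * κ) * Real.log 2 / (1 - (2 : ℝ) ^ (-(2 * κ))) ^ 2 :=
  stmt_12_general κ C hκ hC f hf_sum hnorm htail
end

section
/- Let H be an n×n Hermitian complex matrix, let β > 0 and t_c ≥ 0, and define K = (4πβ)^{−1/2} · ∫_{−t_c}^{t_c} e^{−t²/(4β)} · exp(−itH) dt (a Bochner integral of matrix-valued functions). Then, in the ℓ²→ℓ² operator norm, ‖exp(−β·H²) − K‖ ≤ e^{−t_c²/(4β)}. -/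
/-!
Both operators are functions of `H` in the continuous functional calculus: `e^{-βH²}` is
`cfc (fun z => e^{-βz²}) H`, and pulling the integral through `cfc` shows that `K` is `cfc` of
the truncated Fourier integral `(4πβ)^{-1/2} ∫_{-t_c}^{t_c} e^{-t²/4β} e^{-itz} dt`. The norm of
the difference is thus bounded by its supremum over the real spectrum of `H`. Since the
untruncated integral is exactly `e^{-βz²}`, that scalar difference is bounded by the Gaussian
tail `(4πβ)^{-1/2} ∫_{|t|>t_c} e^{-t²/4β} dt ≤ e^{-t_c²/4β}`.
-/

open scoped Matrix.Norms.L2Operator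
open MeasureTheory
open Complex Set

section Gaussian

variable {β : ℝ}

lemma neg_sq_div_eq_neg_inv_mul_sq (t b : ℝ) : -t ^ 2 / b = -b⁻¹ * t ^ 2 := by
  ring

lemma integrable_exp_neg_sq_div (hβ : 0 < β) :
    Integrable fun t : ℝ => Real.exp (-t ^ 2 / (4 * β)) := by
  simpa only [neg_sq_div_eq_neg_inv_mul_sq] using
    integrable_exp_neg_mul_sq (by positivity : 0 < (4 * β)⁻¹)

lemma integral_Ioi_exp_neg_sq_div (hβ : 0 < β) :
    ∫ t in Ioi 0, Real.exp (-t ^ 2 / (4 * β)) = √(4 * Real.pi * β) / 2 := by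
  simp only [neg_sq_div_eq_neg_inv_mul_sq, integral_gaussian_Ioi]
  congr 2
  field_simp

lemma integral_exp_neg_sq_div_smul_cexp (hβ : 0 < β) (z : ℂ) :
    ∫ t : ℝ, Real.exp (-t ^ 2 / (4 * β)) • cexp (-t * I * z)
      = √(4 * Real.pi * β) • cexp (-β * z ^ 2) := by
  have hb : 0 < (((4 * β)⁻¹ : ℝ) : ℂ).re := by rw [ofReal_re]; positivity
  convert fourierIntegral_gaussian hb (-z) using 1
  · congr 1 with t
    rw [real_smul, ← Complex.exp_add, Complex.ofReal_exp, ← Complex.exp_add]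
    push_cast
    ring_nf
  · have hπβ : (Real.pi : ℂ) / (((4 * β)⁻¹ : ℝ) : ℂ) = ((4 * Real.pi * β : ℝ) : ℂ) := by
      push_cast
      field_simp
    have hβ' : (β : ℂ) ≠ 0 := by exact_mod_cast hβ.ne'
    rw [real_smul, hπβ, Real.sqrt_eq_rpow, Complex.ofReal_cpow (by positivity)]
    push_cast
    congr 2
    field_simp

lemma setIntegral_Ioi_comp_sub {E : Type*} [NormedAddCommGroup E] [NormedSpace ℝ E]
    (f : ℝ → E) (c : ℝ) : ∫ x in Ioi c, f (x - c) = ∫ x in Ioi 0, f x := by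
  rw [← integral_indicator measurableSet_Ioi, ← integral_indicator measurableSet_Ioi,
    ← integral_sub_right_eq_self (indicator (Ioi 0) f) c]
  congr 1 with x
  simp [indicator, sub_pos]

variable {c : ℝ}

lemma integral_Ioi_exp_neg_sq_div_le (hβ : 0 < β) (hc : 0 ≤ c) :
    ∫ t in Ioi c, Real.exp (-t ^ 2 / (4 * β))
      ≤ Real.exp (-c ^ 2 / (4 * β)) * (√(4 * Real.pi * β) / 2) := by
  have hg := integrable_exp_neg_sq_div hβ
  calc ∫ t in Ioi c, Real.exp (-t ^ 2 / (4 * β))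
      ≤ ∫ t in Ioi c, Real.exp (-c ^ 2 / (4 * β)) * Real.exp (-(t - c) ^ 2 / (4 * β)) := by
        refine setIntegral_mono_on hg.integrableOn
          ((hg.comp_sub_right c).const_mul _).integrableOn measurableSet_Ioi fun t ht => ?_
        -- `t² ≥ c² + (t - c)²` for `t ≥ c ≥ 0`
        rw [← Real.exp_add, Real.exp_le_exp, ← add_div,
          div_le_div_iff_of_pos_right (by positivity)]
        nlinarith [mem_Ioi.mp ht]
    _ = Real.exp (-c ^ 2 / (4 * β)) * (√(4 * Real.pi * β) / 2) := by
        rw [integral_const_mul, setIntegral_Ioi_comp_sub (fun t => Real.exp (-t ^ 2 / (4 * β))),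
          integral_Ioi_exp_neg_sq_div hβ]

lemma integral_compl_Ioc_exp_neg_sq_div_le (hβ : 0 < β) (hc : 0 ≤ c) :
    ∫ t in (Ioc (-c) c)ᶜ, Real.exp (-t ^ 2 / (4 * β))
      ≤ Real.exp (-c ^ 2 / (4 * β)) * √(4 * Real.pi * β) := by
  have hg := integrable_exp_neg_sq_div hβ
  have hcompl : (Ioc (-c) c)ᶜ = Iic (-c) ∪ Ioi c := by
    ext t
    simp only [mem_compl_iff, mem_Ioc, mem_union, mem_Iic, mem_Ioi, not_and_or, not_lt, not_le]
  have hreflect : ∫ t in Iic (-c), Real.exp (-t ^ 2 / (4 * β))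
      = ∫ t in Ioi c, Real.exp (-t ^ 2 / (4 * β)) := by
    rw [← integral_comp_neg_Ioi]
    simp only [even_two.neg_pow]
  rw [hcompl, setIntegral_union (Iic_disjoint_Ioi (by linarith)) measurableSet_Ioi
    hg.integrableOn hg.integrableOn, hreflect]
  linarith [integral_Ioi_exp_neg_sq_div_le hβ hc]

lemma norm_cexp_sub_truncated_gaussian_integral_le (hβ : 0 < β) (hc : 0 ≤ c) (x : ℝ) :
    ‖cexp (-β * x ^ 2) - (√(4 * Real.pi * β))⁻¹ •
        ∫ t in (-c)..c, Real.exp (-t ^ 2 / (4 * β)) • cexp (-t * I * x)‖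
      ≤ Real.exp (-c ^ 2 / (4 * β)) := by
  set φ : ℝ → ℂ := fun t => Real.exp (-t ^ 2 / (4 * β)) • cexp (-t * I * x)
  have hg := integrable_exp_neg_sq_div hβ
  have hφ_norm : ∀ t, ‖φ t‖ = Real.exp (-t ^ 2 / (4 * β)) := fun t => by
    rw [norm_smul, Complex.norm_exp]
    simp
  have hφ : Integrable φ :=
    hg.mono' (by fun_prop) (ae_of_all _ fun t => (hφ_norm t).le)
  have hsqrt : 0 < √(4 * Real.pi * β) := by positivity
  have hfull : cexp (-β * x ^ 2) = (√(4 * Real.pi * β))⁻¹ • ∫ t, φ t := by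
    rw [integral_exp_neg_sq_div_smul_cexp hβ x, inv_smul_smul₀ hsqrt.ne']
  rw [hfull, intervalIntegral.integral_of_le (by linarith), ← smul_sub,
    ← integral_add_compl measurableSet_Ioc hφ, add_sub_cancel_left, norm_smul,
    Real.norm_of_nonneg (by positivity)]
  calc (√(4 * Real.pi * β))⁻¹ * ‖∫ t in (Ioc (-c) c)ᶜ, φ t‖
      ≤ (√(4 * Real.pi * β))⁻¹ * ∫ t in (Ioc (-c) c)ᶜ, Real.exp (-t ^ 2 / (4 * β)) := by
        gcongr
        exact norm_integral_le_of_norm_le hg.integrableOn (ae_of_all _ fun t => (hφ_norm t).le)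
    _ ≤ (√(4 * Real.pi * β))⁻¹ * (Real.exp (-c ^ 2 / (4 * β)) * √(4 * Real.pi * β)) := by
        gcongr
        exact integral_compl_Ioc_exp_neg_sq_div_le hβ hc
    _ = Real.exp (-c ^ 2 / (4 * β)) := by field_simp

end Gaussian

section FunctionalCalculus

variable {A : Type*} [CStarAlgebra A]

lemma normedSpace_exp_cfc (f : ℂ → ℂ) (a : A) [IsStarNormal a]
    (hf : ContinuousOn f (spectrum ℂ a) := by cfc_cont_tac) :
    NormedSpace.exp (cfc f a) = cfc (fun z => cexp (f z)) a := by
  rw [← CFC.complex_exp_eq_normedSpace_exp (cfc_predicate f a), cfc_comp' cexp f a]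

lemma normedSpace_exp_smul_eq_cfc (w : ℂ) (a : A) [IsStarNormal a] :
    NormedSpace.exp (w • a) = cfc (fun z => cexp (w * z)) a := by
  rw [← cfc_const_mul_id w a, normedSpace_exp_cfc (w * ·) a]

lemma normedSpace_exp_smul_mul_self_eq_cfc (w : ℂ) (a : A) [IsStarNormal a] :
    NormedSpace.exp (w • (a * a)) = cfc (fun z => cexp (w * z ^ 2)) a := by
  rw [← pow_two, ← cfc_pow_id (R := ℂ) a 2, ← cfc_const_mul w (· ^ 2) a,
    normedSpace_exp_cfc (fun z => w * z ^ 2) a]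

lemma cfc_intervalIntegral (F : ℝ → ℂ → ℂ) (hF : Continuous (Function.uncurry F)) (a : A)
    [IsStarNormal a] {b c : ℝ} (hbc : b ≤ c) :
    cfc (fun z => ∫ t in b..c, F t z) a = ∫ t in b..c, cfc (F t) a := by
  obtain ⟨M, hM⟩ := (isCompact_Icc.prod (spectrum.isCompact a)).exists_bound_of_continuousOn
    hF.continuousOn
  simp only [intervalIntegral.integral_of_le hbc]
  refine cfc_setIntegral measurableSet_Ioc F (fun _ => M) a hF.continuousOn ?_
    (hasFiniteIntegral_const M)
  refine ae_restrict_of_forall_mem measurableSet_Ioc fun t ht z hz => ?_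
  exact hM (t, z) ⟨Ioc_subset_Icc_self ht, hz⟩

theorem IsSelfAdjoint.norm_exp_neg_smul_mul_self_sub_truncated_gaussian_integral_le
    {a : A} (ha : IsSelfAdjoint a) {β c : ℝ} (hβ : 0 < β) (hc : 0 ≤ c) :
    ‖NormedSpace.exp ((-(β : ℂ)) • (a * a)) - (√(4 * Real.pi * β))⁻¹ •
        ∫ t in (-c)..c, Real.exp (-t ^ 2 / (4 * β)) • NormedSpace.exp ((-(t : ℂ) * I) • a)‖
      ≤ Real.exp (-c ^ 2 / (4 * β)) := by
  have := ha.isStarNormal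
  set k : ℂ → ℂ := fun z => ∫ t in (-c)..c, Real.exp (-t ^ 2 / (4 * β)) • cexp (-t * I * z)
  have hk : Continuous k := by fun_prop
  have hK : ∫ t in (-c)..c, Real.exp (-t ^ 2 / (4 * β)) • NormedSpace.exp ((-(t : ℂ) * I) • a)
      = cfc k a := by
    rw [cfc_intervalIntegral _ (by fun_prop) a (by linarith)]
    congr 1 with t
    rw [normedSpace_exp_smul_eq_cfc, ← cfc_smul _ (fun z => cexp (-t * I * z)) a]
  rw [normedSpace_exp_smul_mul_self_eq_cfc, hK, ← cfc_smul _ k a, ← cfc_sub _ _ a]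
  refine norm_cfc_le (by positivity) fun z hz => ?_
  rw [ha.mem_spectrum_eq_re hz]
  exact norm_cexp_sub_truncated_gaussian_integral_le hβ hc z.re

end FunctionalCalculus

/-- **Norm closeness of the Gaussian-filter AGSP to `e^{−βH²}` (Proposition 6, step 1).**
For a Hermitian matrix `H`, `β > 0` and `t_c ≥ 0`, the operator
`K = (4πβ)^{−1/2} ∫_{−t_c}^{t_c} e^{−t²/(4β)} e^{−itH} dt` satisfies
`‖e^{−βH²} − K‖ ≤ e^{−t_c²/(4β)}` in the `ℓ² → ℓ²` operator norm. -/
theorem stmt_14 {n : ℕ} (H : Matrix (Fin n) (Fin n) ℂ) (hH : H.IsHermitian)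
    (β : ℝ) (hβ : 0 < β) (t_c : ℝ) (ht : 0 ≤ t_c) :
    ‖NormedSpace.exp ((-(β : ℂ)) • (H * H)) -
        (Real.sqrt (4 * Real.pi * β))⁻¹ •
          ∫ t in (-t_c)..t_c, Real.exp (-t ^ 2 / (4 * β)) •
            NormedSpace.exp ((-(t : ℂ) * Complex.I) • H)‖
      ≤ Real.exp (-t_c ^ 2 / (4 * β)) :=
  hH.isSelfAdjoint.norm_exp_neg_smul_mul_self_sub_truncated_gaussian_integral_le hβ ht
end

section
/- Let H be an n×n Hermitian complex matrix, let β > 0, t_c ≥ 0, Δ ≥ 0, and define K = (4πβ)^{−1/2} · ∫_{−t_c}^{t_c} e^{−t²/(4β)} · exp(−itH) dt. Suppose w ∈ ℂⁿ lies in the linear span of eigenvectors of H whose eigenvalues μ satisfy |μ| ≥ Δ. Then ‖K·w‖ ≤ (e^{−βΔ²} + e^{−t_c²/(4β)})·‖w‖ in the Euclidean norm. In particular, for t_c = 2βΔ, ‖K·w‖ ≤ 2·e^{−βΔ²}·‖w‖. -/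
open scoped Matrix.Norms.L2Operator
open MeasureTheory

/-!
On an eigenvector of `H` with eigenvalue `μ`, the operator `K` acts as multiplication by the
scalar `f(μ) = (4πβ)^{-1/2} ∫_{-t_c}^{t_c} e^{-t²/(4β)} e^{-itμ} dt`. Over the whole line this
integral is the Fourier transform of a Gaussian, which gives `e^{-βμ²}`; truncating it to
`[-t_c, t_c]` changes it by at most the Gaussian tail mass, `e^{-t_c²/(4β)}`. Eigenvectors of the
Hermitian `H` for distinct eigenvalues are orthogonal, so in an orthonormal eigenbasis `w` only
has components along eigenvalues `|μ| ≥ Δ`, and Parseval turns the scalar bound into the bound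
on `‖K w‖`.
-/

open Set
open scoped Matrix InnerProductSpace Real

theorem integral_Ioi_exp_neg_mul_sq_le {a c : ℝ} (ha : 0 < a) (hc : 0 ≤ c) :
    ∫ t in Ioi c, Real.exp (-a * t ^ 2) ≤ Real.exp (-a * c ^ 2) * (√(π / a) / 2) := by
  have hg : Integrable fun t : ℝ => Real.exp (-a * t ^ 2) := integrable_exp_neg_mul_sq ha
  calc ∫ t in Ioi c, Real.exp (-a * t ^ 2)
      = ∫ x in Ioi 0, Real.exp (-a * (x + c) ^ 2) := by
        simpa only [preimage_add_const_Ioi, sub_self] using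
          ((measurePreserving_add_right volume c).setIntegral_preimage_emb
            (measurableEmbedding_addRight c) (fun t => Real.exp (-a * t ^ 2)) (Ioi c)).symm
    _ ≤ ∫ x in Ioi 0, Real.exp (-a * c ^ 2) * Real.exp (-a * x ^ 2) := by
        refine setIntegral_mono_on (hg.comp_add_right c).integrableOn
          (hg.const_mul _).integrableOn measurableSet_Ioi fun x hx => ?_
        rw [← Real.exp_add, Real.exp_le_exp]
        nlinarith [mul_nonneg (mul_nonneg ha.le (le_of_lt hx)) hc]
    _ = Real.exp (-a * c ^ 2) * (√(π / a) / 2) := by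
        rw [integral_const_mul, integral_gaussian_Ioi]

theorem integral_compl_Ioc_exp_neg_mul_sq_le {a c : ℝ} (ha : 0 < a) (hc : 0 ≤ c) :
    ∫ t in (Ioc (-c) c)ᶜ, Real.exp (-a * t ^ 2) ≤ Real.exp (-a * c ^ 2) * √(π / a) := by
  have hg : Integrable fun t : ℝ => Real.exp (-a * t ^ 2) := integrable_exp_neg_mul_sq ha
  have hsymm : ∫ t in Iic (-c), Real.exp (-a * t ^ 2) = ∫ t in Ioi c, Real.exp (-a * t ^ 2) := by
    rw [← integral_comp_neg_Ioi]
    simp only [neg_sq]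
  rw [compl_Ioc, setIntegral_union (Iic_disjoint_Ioi (by linarith)) measurableSet_Ioi
    hg.integrableOn hg.integrableOn, hsymm]
  linarith [integral_Ioi_exp_neg_mul_sq_le ha hc]

theorem norm_intervalIntegral_sub_integral_le {E : Type*} [NormedAddCommGroup E]
    [NormedSpace ℝ E] {f : ℝ → E} (hf : Integrable f) {a b : ℝ} (hab : a ≤ b) :
    ‖(∫ t in a..b, f t) - ∫ t, f t‖ ≤ ∫ t in (Ioc a b)ᶜ, ‖f t‖ := by
  rw [intervalIntegral.integral_of_le hab, ← integral_add_compl measurableSet_Ioc hf,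
    sub_add_cancel_left, norm_neg]
  exact norm_integral_le_integral_norm f

/-- The filter `K_β` of the paper, in an arbitrary complex Banach algebra: for a matrix `H` it is
the operator `K` of the theorem, and for `μ : ℂ` it is the scalar by which `K` acts on an
eigenvector of `H` with eigenvalue `μ`. -/
noncomputable def gaussianFilter {A : Type*} [NormedRing A] [NormedAlgebra ℂ A] [CompleteSpace A]
    (β t_c : ℝ) (a : A) : A :=
  (√(4 * π * β))⁻¹ •
    ∫ t in (-t_c)..t_c, Real.exp (-t ^ 2 / (4 * β)) • NormedSpace.exp ((-(t : ℂ) * Complex.I) • a)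

open Complex in
theorem integral_gaussian_smul_exp {β : ℝ} (hβ : 0 < β) (μ : ℝ) :
    ∫ t : ℝ, Real.exp (-t ^ 2 / (4 * β)) • NormedSpace.exp ((-(t : ℂ) * I) • (μ : ℂ))
      = (√(4 * π * β) * Real.exp (-β * μ ^ 2) : ℝ) := by
  have hb : 0 < (4 * (β : ℂ))⁻¹.re := by norm_cast; positivity
  have hF : ∀ t : ℝ, Real.exp (-t ^ 2 / (4 * β)) • NormedSpace.exp ((-(t : ℂ) * I) • (μ : ℂ))
      = cexp (I * (-μ : ℂ) * t) * cexp (-(4 * (β : ℂ))⁻¹ * t ^ 2) := by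
    intro t
    rw [← Complex.exp_eq_exp_ℂ, Complex.real_smul, Complex.ofReal_exp, mul_comm, smul_eq_mul]
    push_cast
    ring_nf
  simp_rw [hF]
  rw [fourierIntegral_gaussian hb]
  push_cast
  congr 1
  · rw [show (π : ℂ) / (4 * (β : ℂ))⁻¹ = ((4 * π * β : ℝ) : ℂ) by push_cast; field_simp,
      Real.sqrt_eq_rpow, Complex.ofReal_cpow (by positivity)]
    norm_num
  · congr 1
    field_simp

theorem norm_gaussianFilter_le {β t_c : ℝ} (hβ : 0 < β) (ht : 0 ≤ t_c) (μ : ℝ) :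
    ‖gaussianFilter β t_c (μ : ℂ)‖ ≤ Real.exp (-β * μ ^ 2) + Real.exp (-t_c ^ 2 / (4 * β)) := by
  set F : ℝ → ℂ := fun t =>
    Real.exp (-t ^ 2 / (4 * β)) • NormedSpace.exp ((-(t : ℂ) * Complex.I) • (μ : ℂ))
  have hnorm : ∀ t, ‖F t‖ = Real.exp (-(4 * β)⁻¹ * t ^ 2) := by
    intro t
    rw [norm_smul, ← Complex.exp_eq_exp_ℂ, Complex.norm_exp]
    simp [div_eq_inv_mul]
  have hF : Integrable F :=
    (integrable_exp_neg_mul_sq (by positivity)).mono'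
      (by fun_prop : Continuous F).aestronglyMeasurable (.of_forall fun t => (hnorm t).le)
  have hs : 0 < √(4 * π * β) := by positivity
  have hfull : ‖∫ t, F t‖ = √(4 * π * β) * Real.exp (-β * μ ^ 2) := by
    rw [integral_gaussian_smul_exp hβ, Complex.norm_real, Real.norm_of_nonneg (by positivity)]
  have htail : ‖(∫ t in (-t_c)..t_c, F t) - ∫ t, F t‖
      ≤ Real.exp (-t_c ^ 2 / (4 * β)) * √(4 * π * β) :=
    calc _ ≤ ∫ t in (Ioc (-t_c) t_c)ᶜ, ‖F t‖ :=
          norm_intervalIntegral_sub_integral_le hF (by linarith)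
      _ = ∫ t in (Ioc (-t_c) t_c)ᶜ, Real.exp (-(4 * β)⁻¹ * t ^ 2) := by simp_rw [hnorm]
      _ ≤ Real.exp (-(4 * β)⁻¹ * t_c ^ 2) * √(π / (4 * β)⁻¹) :=
        integral_compl_Ioc_exp_neg_mul_sq_le (by positivity) ht
      _ = Real.exp (-t_c ^ 2 / (4 * β)) * √(4 * π * β) := by
        rw [div_inv_eq_mul, neg_mul, neg_div, div_eq_inv_mul]
        ring_nf
  calc ‖gaussianFilter β t_c (μ : ℂ)‖ = (√(4 * π * β))⁻¹ * ‖∫ t in (-t_c)..t_c, F t‖ := by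
        rw [gaussianFilter, norm_smul, norm_inv, Real.norm_of_nonneg hs.le]
    _ ≤ (√(4 * π * β))⁻¹ * (‖∫ t, F t‖ + ‖(∫ t in (-t_c)..t_c, F t) - ∫ t, F t‖) := by
        gcongr
        exact norm_le_norm_add_norm_sub' _ _
    _ ≤ (√(4 * π * β))⁻¹ * (√(4 * π * β) * Real.exp (-β * μ ^ 2)
          + Real.exp (-t_c ^ 2 / (4 * β)) * √(4 * π * β)) := by
        rw [hfull]
        gcongr
    _ = Real.exp (-β * μ ^ 2) + Real.exp (-t_c ^ 2 / (4 * β)) := by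
        field_simp

theorem norm_gaussianFilter_le_of_le_abs {β t_c Δ : ℝ} (hβ : 0 < β) (ht : 0 ≤ t_c)
    (hΔ : 0 ≤ Δ) {μ : ℝ} (hμ : Δ ≤ |μ|) :
    ‖gaussianFilter β t_c (μ : ℂ)‖ ≤ Real.exp (-β * Δ ^ 2) + Real.exp (-t_c ^ 2 / (4 * β)) := by
  have hsq : Δ ^ 2 ≤ μ ^ 2 := by simpa only [sq_abs] using pow_le_pow_left₀ hΔ hμ 2
  refine (norm_gaussianFilter_le hβ ht μ).trans (add_le_add_left (Real.exp_le_exp.2 ?_) _)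
  nlinarith

theorem ContinuousLinearMap.map_gaussianFilter {A E : Type*} [NormedRing A] [NormedAlgebra ℂ A]
    [CompleteSpace A] [NormedAddCommGroup E] [NormedSpace ℂ E] [CompleteSpace E]
    (L : A →L[ℂ] E) {a : A} {μ : ℂ} {e : E}
    (h : ∀ s : ℂ, L (NormedSpace.exp (s • a)) = NormedSpace.exp (s • μ) • e) (β t_c : ℝ) :
    L (gaussianFilter β t_c a) = gaussianFilter β t_c μ • e := by
  have hcont : Continuous fun t : ℝ =>
      Real.exp (-t ^ 2 / (4 * β)) • NormedSpace.exp ((-(t : ℂ) * Complex.I) • a) := by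
    -- `NormedSpace.exp_continuous` is stated over `ℚ`
    let _ : NormedAlgebra ℚ A := NormedAlgebra.restrictScalars ℚ ℂ A
    fun_prop
  simp only [gaussianFilter, L.map_smul_of_tower,
    ← L.intervalIntegral_comp_comm (hcont.intervalIntegrable _ _), h, ← smul_assoc,
    intervalIntegral.integral_smul_const]

theorem Matrix.exp_mulVec_of_mulVec_eq_smul {𝕜 n : Type*} [RCLike 𝕜] [Fintype n]
    [DecidableEq n] {A : Matrix n n 𝕜} {v : n → 𝕜} {μ : 𝕜} (h : A *ᵥ v = μ • v) :
    NormedSpace.exp A *ᵥ v = NormedSpace.exp μ • v := by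
  have hpow : ∀ k : ℕ, (A ^ k) *ᵥ v = μ ^ k • v := by
    intro k
    induction k with
    | zero => simp
    | succ k ih =>
      rw [pow_succ, ← Matrix.mulVec_mulVec, h, Matrix.mulVec_smul, ih, smul_smul, pow_succ']
  refine ((NormedSpace.exp_series_hasSum_exp' (𝕂 := 𝕜) A).map (Matrix.mulVec.addMonoidHomLeft v)
    (continuous_id.matrix_mulVec continuous_const)).unique ?_
  convert (NormedSpace.exp_series_hasSum_exp' (𝕂 := 𝕜) μ).smul_const v using 2 with k
  change ((k.factorial⁻¹ : 𝕜) • A ^ k) *ᵥ v = _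
  rw [Matrix.smul_mulVec, hpow, smul_smul, smul_eq_mul]

theorem Matrix.gaussianFilter_mulVec_of_mulVec_eq_smul {n : Type*} [Fintype n] [DecidableEq n]
    {H : Matrix n n ℂ} {v : n → ℂ} {μ : ℂ} (h : H *ᵥ v = μ • v) (β t_c : ℝ) :
    gaussianFilter β t_c H *ᵥ v = gaussianFilter β t_c μ • v := by
  let L : Matrix n n ℂ →L[ℂ] n → ℂ :=
    LinearMap.toContinuousLinearMap ((LinearMap.applyₗ v).comp Matrix.toLin'.toLinearMap)
  refine L.map_gaussianFilter (fun s => Matrix.exp_mulVec_of_mulVec_eq_smul ?_) β t_c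
  rw [Matrix.smul_mulVec, h, smul_smul, smul_eq_mul]

theorem LinearMap.IsSymmetric.inner_eq_zero_of_mem_span_eigenvectors {𝕜 E : Type*} [RCLike 𝕜]
    [NormedAddCommGroup E] [InnerProductSpace 𝕜 E] {T : E →ₗ[𝕜] E} (hT : T.IsSymmetric)
    {S : Set 𝕜} {b : E} {r : ℝ} (hb : T b = (r : 𝕜) • b) (hr : (r : 𝕜) ∉ S) {x : E}
    (hx : x ∈ Submodule.span 𝕜 {v | ∃ μ ∈ S, T v = μ • v}) : ⟪b, x⟫_𝕜 = 0 := by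
  suffices Submodule.span 𝕜 {v | ∃ μ ∈ S, T v = μ • v} ≤ LinearMap.ker (innerₛₗ 𝕜 b) from this hx
  rw [Submodule.span_le]
  rintro v ⟨μ, hμ, hv⟩
  have hsymm := hT b v
  rw [hb, hv, inner_smul_left, inner_smul_right, RCLike.conj_ofReal] at hsymm
  have hprod : (μ - r) * ⟪b, v⟫_𝕜 = 0 := by linear_combination hsymm.symm
  simp only [SetLike.mem_coe, LinearMap.mem_ker, innerₛₗ_apply_apply]
  exact (mul_eq_zero.1 hprod).resolve_left (sub_ne_zero.2 fun h => hr (h ▸ hμ))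

section OrthonormalBasis

variable {ι 𝕜 E : Type*} [Fintype ι] [RCLike 𝕜] [NormedAddCommGroup E] [InnerProductSpace 𝕜 E]
  (B : OrthonormalBasis ι 𝕜 E) {T : E →ₗ[𝕜] E} {s : ι → 𝕜}

theorem OrthonormalBasis.inner_apply_of_apply_eq_smul (hT : ∀ i, T (B i) = s i • B i)
    (j : ι) (x : E) : ⟪B j, T x⟫_𝕜 = s j * ⟪B j, x⟫_𝕜 := by
  classical
  conv_lhs => rw [← B.sum_repr' x]
  simp [hT, inner_sum, inner_smul_right, B.inner_eq_ite, mul_comm]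

theorem OrthonormalBasis.norm_apply_le_of_apply_eq_smul (hT : ∀ i, T (B i) = s i • B i)
    {M : ℝ} (hM : 0 ≤ M) {x : E} (hx : ∀ j, ⟪B j, x⟫_𝕜 ≠ 0 → ‖s j‖ ≤ M) :
    ‖T x‖ ≤ M * ‖x‖ := by
  rw [← pow_le_pow_iff_left₀ (norm_nonneg _) (by positivity) two_ne_zero, mul_pow,
    ← B.sum_sq_norm_inner_right, ← B.sum_sq_norm_inner_right, Finset.mul_sum]
  gcongr with j
  rw [B.inner_apply_of_apply_eq_smul hT, norm_mul, mul_pow]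
  by_cases h0 : ⟪B j, x⟫_𝕜 = 0
  · simp [h0]
  · gcongr
    exact hx j h0

end OrthonormalBasis

theorem Matrix.IsHermitian.toEuclideanLin_eigenvectorBasis {𝕜 n : Type*} [RCLike 𝕜] [Fintype n]
    [DecidableEq n] {A : Matrix n n 𝕜} (hA : A.IsHermitian) (j : n) :
    Matrix.toEuclideanLin A (hA.eigenvectorBasis j)
      = (hA.eigenvalues j : 𝕜) • hA.eigenvectorBasis j := by
  rw [Matrix.toLpLin_apply, hA.mulVec_eigenvectorBasis, RCLike.real_smul_eq_coe_smul (K := 𝕜)]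
  rfl

theorem Matrix.IsHermitian.inner_eigenvectorBasis_eq_zero {𝕜 n : Type*} [RCLike 𝕜] [Fintype n]
    [DecidableEq n] {A : Matrix n n 𝕜} (hA : A.IsHermitian) {S : Set 𝕜} {j : n}
    (hj : (hA.eigenvalues j : 𝕜) ∉ S) {w : n → 𝕜}
    (hw : w ∈ Submodule.span 𝕜 {v | ∃ μ ∈ S, A *ᵥ v = μ • v}) :
    ⟪hA.eigenvectorBasis j, WithLp.toLp 2 w⟫_𝕜 = 0 := by
  refine (Matrix.isSymmetric_toEuclideanLin_iff.2 hA).inner_eq_zero_of_mem_span_eigenvectors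
    (hA.toEuclideanLin_eigenvectorBasis j) hj ?_
  have hmap := Submodule.mem_map_of_mem
    (f := (WithLp.linearEquiv 2 𝕜 (n → 𝕜)).symm.toLinearMap) hw
  rw [← Submodule.span_image] at hmap
  refine Submodule.span_mono ?_ hmap
  rintro _ ⟨v, ⟨μ, hμ, hv⟩, rfl⟩
  exact ⟨μ, hμ, by simp [Matrix.toLpLin_apply, hv]⟩

theorem Matrix.IsHermitian.toEuclideanLin_gaussianFilter_eigenvectorBasis {n : Type*}
    [Fintype n] [DecidableEq n] {H : Matrix n n ℂ} (hH : H.IsHermitian) (β t_c : ℝ) (j : n) :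
    Matrix.toEuclideanLin (gaussianFilter β t_c H) (hH.eigenvectorBasis j)
      = gaussianFilter β t_c (hH.eigenvalues j : ℂ) • hH.eigenvectorBasis j := by
  rw [Matrix.toLpLin_apply, Matrix.gaussianFilter_mulVec_of_mulVec_eq_smul
    ((hH.mulVec_eigenvectorBasis j).trans (RCLike.real_smul_eq_coe_smul _ _))]
  rfl

/-- **Damping property of the Gaussian-filter AGSP (Proposition 6).** For Hermitian
`H`, `β > 0`, `t_c ≥ 0`, `Δ ≥ 0` and
`K = (4πβ)^{−1/2} ∫_{−t_c}^{t_c} e^{−t²/(4β)} e^{−itH} dt`, any vector `w` in the span of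
eigenvectors of `H` with eigenvalues of absolute value `≥ Δ` satisfies
`‖Kw‖ ≤ (e^{−βΔ²} + e^{−t_c²/(4β)})‖w‖` (Euclidean norms); in particular for
`t_c = 2βΔ`, `‖Kw‖ ≤ 2e^{−βΔ²}‖w‖`. -/
theorem stmt_15 {n : ℕ} (H : Matrix (Fin n) (Fin n) ℂ) (hH : H.IsHermitian)
    (β : ℝ) (hβ : 0 < β) (t_c Δ : ℝ) (ht : 0 ≤ t_c) (hΔ : 0 ≤ Δ)
    (K : Matrix (Fin n) (Fin n) ℂ)
    (hK : K = (Real.sqrt (4 * Real.pi * β))⁻¹ •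
      ∫ t in (-t_c)..t_c, Real.exp (-t ^ 2 / (4 * β)) •
        NormedSpace.exp ((-(t : ℂ) * Complex.I) • H))
    (w : Fin n → ℂ)
    (hw : w ∈ Submodule.span ℂ
      {v : Fin n → ℂ | ∃ μ : ℂ, Δ ≤ ‖μ‖ ∧ H.mulVec v = μ • v}) :
    Real.sqrt (∑ i : Fin n, ‖K.mulVec w i‖ ^ 2)
      ≤ (Real.exp (-β * Δ ^ 2) + Real.exp (-t_c ^ 2 / (4 * β))) *
          Real.sqrt (∑ i : Fin n, ‖w i‖ ^ 2) ∧
    (t_c = 2 * β * Δ →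
      Real.sqrt (∑ i : Fin n, ‖K.mulVec w i‖ ^ 2)
        ≤ 2 * Real.exp (-β * Δ ^ 2) * Real.sqrt (∑ i : Fin n, ‖w i‖ ^ 2)) := by
  replace hK : K = gaussianFilter β t_c H := hK
  have hcoef : ∀ j, ⟪hH.eigenvectorBasis j, WithLp.toLp 2 w⟫_ℂ ≠ 0 →
      ‖gaussianFilter β t_c (hH.eigenvalues j : ℂ)‖
        ≤ Real.exp (-β * Δ ^ 2) + Real.exp (-t_c ^ 2 / (4 * β)) := fun j hj =>
    norm_gaussianFilter_le_of_le_abs hβ ht hΔ <| by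
      by_contra! hlt
      exact hj (hH.inner_eigenvectorBasis_eq_zero (S := {μ | Δ ≤ ‖μ‖}) (by simpa using hlt) hw)
  have hmain := hH.eigenvectorBasis.norm_apply_le_of_apply_eq_smul
    (hK ▸ hH.toEuclideanLin_gaussianFilter_eigenvectorBasis β t_c) (by positivity) hcoef
  simp only [EuclideanSpace.norm_eq, Matrix.toLpLin_apply] at hmain
  refine ⟨hmain, fun htc => ?_⟩
  rwa [htc, show -(2 * β * Δ) ^ 2 / (4 * β) = -β * Δ ^ 2 by field_simp; ring, ← two_mul] at hmain
end

section
/- For α ∈ (0,1) define g_α(t) = (2α/(1−α)) · ( cos t · (sin t)^{2α−1} − sin t · (cos t)^{2α−1} ) / ( (cos t)^{2α} + (sin t)^{2α} ) for t ∈ (0, π/2), with real powers. Then as t → 0⁺: (i) if 0 < α < 1/2, g_α(t) → +∞; (ii) if α = 1/2, g_α(t) → 2; (iii) if 1/2 < α < 1, g_α(t) → 0. -/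
/-! Near `0⁺` the denominator tends to `1` and `sin t · (cos t)^{2α−1}` tends to `0`, so the
behaviour of `g_α` is that of `(2α/(1−α)) · (sin t)^{2α−1}`: the exponent `2α − 1` is negative,
zero or positive according as `α < 1/2`, `α = 1/2` or `α > 1/2`. -/

open Filter Real Topology

noncomputable def renyiRate (α t : ℝ) : ℝ :=
  2 * α / (1 - α) * (cos t * sin t ^ (2 * α - 1) - sin t * cos t ^ (2 * α - 1)) /
    (cos t ^ (2 * α) + sin t ^ (2 * α))

theorem tendsto_sin_nhdsGT_zero : Tendsto sin (𝓝[>] 0) (𝓝[>] 0) := by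
  refine tendsto_nhdsWithin_iff.2 ⟨?_, ?_⟩
  · simpa using (continuous_sin.tendsto 0).mono_left nhdsWithin_le_nhds
  · filter_upwards [Ioo_mem_nhdsGT pi_pos] with t ht using sin_pos_of_pos_of_lt_pi ht.1 ht.2

theorem tendsto_cos_nhds_zero : Tendsto cos (𝓝 0) (𝓝 1) := by
  simpa using continuous_cos.tendsto 0

theorem tendsto_cos_rpow_nhds_zero (c : ℝ) : Tendsto (fun t => cos t ^ c) (𝓝 0) (𝓝 1) := by
  simpa using (continuous_cos.continuousAt (x := 0)).rpow_const (p := c) (by simp) |>.tendsto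

theorem tendsto_sin_rpow_nhds_zero {c : ℝ} (hc : 0 < c) :
    Tendsto (fun t => sin t ^ c) (𝓝 0) (𝓝 0) := by
  simpa [zero_rpow hc.ne'] using
    ((continuous_sin.continuousAt (x := 0)).rpow_const (p := c) (Or.inr hc.le)).tendsto

theorem tendsto_sin_rpow_nhdsGT_zero_atTop {c : ℝ} (hc : c < 0) :
    Tendsto (fun t => sin t ^ c) (𝓝[>] 0) atTop :=
  (tendsto_rpow_neg_nhdsGT_zero hc).comp tendsto_sin_nhdsGT_zero

theorem tendsto_cos_rpow_add_sin_rpow_nhds_zero {c : ℝ} (hc : 0 < c) :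
    Tendsto (fun t => cos t ^ c + sin t ^ c) (𝓝 0) (𝓝 1) := by
  simpa using (tendsto_cos_rpow_nhds_zero c).add (tendsto_sin_rpow_nhds_zero hc)

theorem tendsto_sin_mul_cos_rpow_nhds_zero (c : ℝ) :
    Tendsto (fun t => sin t * cos t ^ c) (𝓝 0) (𝓝 0) := by
  simpa using (continuous_sin.tendsto 0).mul (tendsto_cos_rpow_nhds_zero c)

theorem tendsto_renyiRate_of_tendsto_sin_rpow {α l : ℝ} (hα : 0 < α)
    (h : Tendsto (fun t => sin t ^ (2 * α - 1)) (𝓝[>] 0) (𝓝 l)) :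
    Tendsto (renyiRate α) (𝓝[>] 0) (𝓝 (2 * α / (1 - α) * l)) := by
  have hcos := tendsto_cos_nhds_zero.mono_left (nhdsWithin_le_nhds (s := Set.Ioi 0))
  have hnum := ((hcos.mul h).sub ((tendsto_sin_mul_cos_rpow_nhds_zero (2 * α - 1)).mono_left
    nhdsWithin_le_nhds)).const_mul (2 * α / (1 - α))
  have hden := (tendsto_cos_rpow_add_sin_rpow_nhds_zero (by positivity : 0 < 2 * α)).mono_left
    (nhdsWithin_le_nhds (s := Set.Ioi 0))
  have h := hnum.div hden one_ne_zero
  rw [one_mul, sub_zero, div_one] at h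
  exact h

theorem tendsto_renyiRate_atTop {α : ℝ} (h0 : 0 < α) (h : α < 1 / 2) :
    Tendsto (renyiRate α) (𝓝[>] 0) atTop := by
  have hcos := tendsto_cos_nhds_zero.mono_left (nhdsWithin_le_nhds (s := Set.Ioi 0))
  have hnum : Tendsto (fun t => cos t * sin t ^ (2 * α - 1) - sin t * cos t ^ (2 * α - 1))
      (𝓝[>] 0) atTop := by
    simpa [sub_eq_add_neg] using
      (hcos.pos_mul_atTop one_pos (tendsto_sin_rpow_nhdsGT_zero_atTop (by linarith))).atTop_add
        ((tendsto_sin_mul_cos_rpow_nhds_zero (2 * α - 1)).mono_left nhdsWithin_le_nhds).neg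
  have hden := ((tendsto_cos_rpow_add_sin_rpow_nhds_zero (by positivity : 0 < 2 * α)).mono_left
    (nhdsWithin_le_nhds (s := Set.Ioi 0))).inv₀ one_ne_zero
  have hC : 0 < 2 * α / (1 - α) := div_pos (by linarith) (by linarith)
  exact ((tendsto_const_nhds.pos_mul_atTop hC hnum).atTop_mul_pos one_pos (by simpa using hden)).congr
    fun t => (div_eq_mul_inv _ _).symm

/-- **Instantaneous Rényi entanglement rate of the two-qubit toy model as `t → 0⁺`.**
With `g_α(t) = (2α/(1−α))·(cos t·(sin t)^{2α−1} − sin t·(cos t)^{2α−1})/((cos t)^{2α} +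
(sin t)^{2α})` on `(0, π/2)` (real powers): for `0 < α < 1/2` it tends to `+∞`; for
`α = 1/2` it tends to `2`; and for `1/2 < α < 1` it tends to `0`. -/
theorem stmt_19 (α : ℝ) (hα : α ∈ Set.Ioo (0 : ℝ) 1) :
    ((α < 1/2 → Tendsto (fun t : ℝ =>
        (2 * α / (1 - α)) *
          (Real.cos t * Real.sin t ^ (2 * α - 1) -
            Real.sin t * Real.cos t ^ (2 * α - 1)) /
          (Real.cos t ^ (2 * α) + Real.sin t ^ (2 * α)))
        (nhdsWithin 0 (Set.Ioo 0 (Real.pi / 2))) atTop) ∧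
     (α = 1/2 → Tendsto (fun t : ℝ =>
        (2 * α / (1 - α)) *
          (Real.cos t * Real.sin t ^ (2 * α - 1) -
            Real.sin t * Real.cos t ^ (2 * α - 1)) /
          (Real.cos t ^ (2 * α) + Real.sin t ^ (2 * α)))
        (nhdsWithin 0 (Set.Ioo 0 (Real.pi / 2))) (nhds 2)) ∧
     (1/2 < α → Tendsto (fun t : ℝ =>
        (2 * α / (1 - α)) *
          (Real.cos t * Real.sin t ^ (2 * α - 1) -
            Real.sin t * Real.cos t ^ (2 * α - 1)) /
          (Real.cos t ^ (2 * α) + Real.sin t ^ (2 * α)))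
        (nhdsWithin 0 (Set.Ioo 0 (Real.pi / 2))) (nhds 0))) := by
  have hF : 𝓝[Set.Ioo 0 (π / 2)] (0 : ℝ) ≤ 𝓝[>] 0 := nhdsWithin_mono _ Set.Ioo_subset_Ioi_self
  refine ⟨fun h => (tendsto_renyiRate_atTop hα.1 h).mono_left hF, fun h => ?_, fun h => ?_⟩
  · subst h
    have := tendsto_renyiRate_of_tendsto_sin_rpow (α := 1 / 2) (l := 1) (by norm_num)
      (by norm_num)
    norm_num at this
    exact this.mono_left hF
  · have := tendsto_renyiRate_of_tendsto_sin_rpow hα.1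
      ((tendsto_sin_rpow_nhds_zero (by linarith)).mono_left nhdsWithin_le_nhds)
    rw [mul_zero] at this
    exact this.mono_left hF
end
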